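/- arXiv:1711.05029 — 6 statements merged into one kernel-verified Lean document; each statement's English description precedes it below -/
import Mathlib

section
/- Assume the trace class condition ∑_{n≥0}(|a_n - 1/2| + |b_n|) < ∞. Let ζ ∈ ℂ with 0 < |ζ| ≤ 1 and ζ ∉ {1, -1}, and set z = (ζ + ζ⁻¹)/2. Then there exist a solution f = (f_n)_{n≥-1} of the Jacobi equation at spectral parameter z and a constant C > 0 such that |f_n ζ^{-n} - 1| ≤ C ρ_n for all n ≥ 0, where ρ_n = ∑_{m≥n}(|a_m - 1/2| + |b_m|). (Existence of the Jost solution with asymptotics f_n = ζⁿ(1 + O(ρ_n)).) -/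
open Filter Finset MeasureTheory

noncomputable section

/-- Extended coefficient sequence with `a₋₁ = 1/2`. -/
def aext (a : ℕ → ℝ) : ℤ → ℝ := fun k => if k < 0 then 1/2 else a k.toNat

/-- `u : ℤ → ℂ` (restricted to indices `n ≥ -1`) solves the Jacobi equation
`a_{n-1} u_{n-1} + b_n u_n + a_n u_{n+1} = z u_n` for all `n ≥ 0`, with `a_{-1} = 1/2`. -/
def IsJacobiSol (a b : ℕ → ℝ) (z : ℂ) (u : ℤ → ℂ) : Prop :=
  ∀ n : ℕ, (aext a ((n : ℤ) - 1) : ℂ) * u ((n : ℤ) - 1) + (b n : ℂ) * u (n : ℤ)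
      + (a n : ℂ) * u ((n : ℤ) + 1) = z * u (n : ℤ)

/-- The perturbation `V = H - H₀` applied to a sequence:
`(Vf)_m = (a_{m-1} - 1/2) f_{m-1} + b_m f_m + (a_m - 1/2) f_{m+1}` with `a_{-1} = 1/2`. -/
def jV (a b : ℕ → ℝ) (f : ℤ → ℂ) (m : ℕ) : ℂ :=
  ((aext a ((m : ℤ) - 1) - 1/2 : ℝ) : ℂ) * f ((m : ℤ) - 1) + (b m : ℂ) * f (m : ℤ)
    + ((a m - 1/2 : ℝ) : ℂ) * f ((m : ℤ) + 1)

/-!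
Write a solution as `f_k = ζ^k g_{k+1}` (`k ≥ -1`). Variation of constants against the free
solutions `ζ^{±n}` turns the Jacobi equation into the Volterra-type equation
`g_n = 1 - ∑_{i ≥ 0} κ_{i+1} (ζ^{-m} V f)_{m = n + i}` with a bounded kernel `κ`. Its right side
is a contraction of the bounded sequences with constant `K ρ_0` (`K = 8 / (|ζ| |ζ⁻¹ - ζ|)`), and
its fixed point obeys `|g_{n+1} - 1| ≤ 2 K ρ_n`. In general `K ρ_N ≤ 1/2` from some `N` on; the
solution built for the coefficients shifted by `N` is continued backwards through the recursion
(possible as `a_n > 0`), and the finitely many indices with `ρ_n > 1/(2K)` only enlarge `C`.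
-/

open scoped BoundedContinuousFunction

namespace Jost

variable {a b : ℕ → ℝ} {ζ : ℂ}

@[simp]
lemma aext_natCast (a : ℕ → ℝ) (m : ℕ) : aext a m = a m := by
  simp [aext]

lemma aext_pos (ha : ∀ n, 0 < a n) (k : ℤ) : 0 < aext a k := by
  unfold aext
  split_ifs
  · norm_num
  · exact ha _

def JacobiEqAt (a b : ℕ → ℝ) (z : ℂ) (u : ℤ → ℂ) (n : ℕ) : Prop :=
  (aext a ((n : ℤ) - 1) : ℂ) * u ((n : ℤ) - 1) + (b n : ℂ) * u n + (a n : ℂ) * u ((n : ℤ) + 1)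
    = z * u n

lemma jacobiEqAt_iff_jV {z : ℂ} {u : ℤ → ℂ} {n : ℕ} :
    JacobiEqAt a b z u n ↔ (u ((n : ℤ) - 1) + u ((n : ℤ) + 1)) / 2 + jV a b u n = z * u n := by
  unfold JacobiEqAt jV
  push_cast
  constructor <;> intro h <;> linear_combination h

/-- Solve the equation at `n` for `u_{n-1}`, which is possible as `a_{n-1} > 0`, and descend. -/
theorem exists_isJacobiSol_eq_of_forall_le (ha : ∀ n, 0 < a n) (z : ℂ) (N : ℕ) (u : ℤ → ℂ)
    (hu : ∀ n, N ≤ n → JacobiEqAt a b z u n) :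
    ∃ v, IsJacobiSol a b z v ∧ ∀ k : ℤ, (N : ℤ) - 1 ≤ k → v k = u k := by
  induction N generalizing u with
  | zero => exact ⟨u, fun n => hu n n.zero_le, fun _ _ => rfl⟩
  | succ N ih =>
    set u' := Function.update u ((N : ℤ) - 1)
      (((z - b N) * u N - a N * u ((N : ℤ) + 1)) / aext a ((N : ℤ) - 1))
    have hu' : ∀ n, N ≤ n → JacobiEqAt a b z u' n := by
      intro n hn
      rcases hn.eq_or_lt with rfl | hlt
      · have hne : (aext a ((N : ℤ) - 1) : ℂ) ≠ 0 := by exact_mod_cast (aext_pos ha _).ne'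
        simp only [JacobiEqAt, u', Function.update_self]
        rw [Function.update_of_ne (by omega), Function.update_of_ne (by omega),
          mul_div_cancel₀ _ hne]
        ring
      · have h := hu n hlt
        simp only [JacobiEqAt, u'] at h ⊢
        rwa [Function.update_of_ne (by omega), Function.update_of_ne (by omega),
          Function.update_of_ne (by omega)]
    obtain ⟨v, hv, hvu⟩ := ih u' hu'
    refine ⟨v, hv, fun k hk => ?_⟩
    push_cast at hk
    rw [hvu k (by omega)]
    exact Function.update_of_ne (by omega) _ _

lemma jacobiEqAt_of_shift {z : ℂ} {N : ℕ} {f : ℤ → ℂ}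
    (hf : IsJacobiSol (fun m => a (N + m)) (fun m => b (N + m)) z f) (c : ℂ) {n : ℕ}
    (hn : N + 1 ≤ n) : JacobiEqAt a b z (fun k => c * f (k - N)) n := by
  obtain ⟨k, rfl⟩ := Nat.exists_eq_add_of_le hn
  have h := hf (k + 1)
  have e : ((N + 1 + k : ℕ) : ℤ) - 1 = ((N + k : ℕ) : ℤ) := by push_cast; ring
  simp only [JacobiEqAt, e, aext_natCast]
  simp only [Nat.cast_add, Nat.cast_one, add_sub_cancel_right, aext_natCast] at h
  have e1 : ((N : ℤ) + k - N) = k := by ring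
  have e2 : ((N : ℤ) + 1 + k - N) = k + 1 := by ring
  have e3 : ((N : ℤ) + 1 + k + 1 - N) = k + 1 + 1 := by ring
  push_cast
  rw [e1, e2, e3, show N + 1 + k = N + (k + 1) by ring]
  linear_combination c * h

def tail (a b : ℕ → ℝ) (n : ℕ) : ℝ := ∑' m : ℕ, (|a (n + m) - 1/2| + |b (n + m)|)

lemma tail_nonneg (n : ℕ) : 0 ≤ tail a b n :=
  tsum_nonneg fun _ => by positivity

lemma summable_tail_terms (htr : Summable fun n : ℕ => |a n - 1/2| + |b n|) (n : ℕ) :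
    Summable fun m => |a (n + m) - 1/2| + |b (n + m)| :=
  htr.comp_injective (add_right_injective n)

lemma tail_eq_add (htr : Summable fun n : ℕ => |a n - 1/2| + |b n|) (n : ℕ) :
    tail a b n = |a n - 1/2| + |b n| + tail a b (n + 1) := by
  rw [tail, (summable_tail_terms htr n).tsum_eq_zero_add, tail, add_zero]
  congr 1
  exact tsum_congr fun m => by rw [add_right_comm n 1 m, add_assoc]

lemma tail_antitone (htr : Summable fun n : ℕ => |a n - 1/2| + |b n|) : Antitone (tail a b) :=
  antitone_nat_of_succ_le fun n => by
    rw [tail_eq_add htr n]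
    linarith [abs_nonneg (a n - 1/2), abs_nonneg (b n)]

lemma tendsto_tail : Tendsto (tail a b) atTop (nhds 0) :=
  (tendsto_sum_nat_add fun n => |a n - 1/2| + |b n|).congr fun n => by simp only [tail, add_comm]

lemma tail_shift (N n : ℕ) :
    tail (fun m => a (N + m)) (fun m => b (N + m)) n = tail a b (N + n) := by
  simp only [tail, add_assoc]

def coeffNorm (a b : ℕ → ℝ) (m : ℕ) : ℝ := |aext a ((m : ℤ) - 1) - 1/2| + |b m| + |a m - 1/2|

lemma coeffNorm_nonneg (m : ℕ) : 0 ≤ coeffNorm a b m := by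
  unfold coeffNorm; positivity

lemma coeffNorm_zero : coeffNorm a b 0 = |a 0 - 1/2| + |b 0| := by
  simp [coeffNorm, aext, add_comm]

lemma coeffNorm_succ_le (n : ℕ) :
    coeffNorm a b (n + 1) ≤ (|a n - 1/2| + |b n|) + (|a (n + 1) - 1/2| + |b (n + 1)|) := by
  have : aext a (((n + 1 : ℕ) : ℤ) - 1) = a n := by push_cast; simp
  rw [coeffNorm, this]
  linarith [abs_nonneg (b n)]

lemma summable_coeffNorm (htr : Summable fun n : ℕ => |a n - 1/2| + |b n|) :
    Summable (coeffNorm a b) :=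
  (summable_nat_add_iff 1).1 <| Summable.of_nonneg_of_le (fun _ => coeffNorm_nonneg _)
    coeffNorm_succ_le (htr.add ((summable_nat_add_iff 1).2 htr))

/-- At `n = 0` the truncated `0 - 1 = 0` is harmless because `a₋₁ - 1/2 = 0`. -/
lemma tsum_coeffNorm_le (htr : Summable fun n : ℕ => |a n - 1/2| + |b n|) (n : ℕ) :
    ∑' i, coeffNorm a b (n + i) ≤ 2 * tail a b (n - 1) := by
  have hsucc : ∀ k, ∑' i, coeffNorm a b (k + 1 + i) ≤ tail a b k + tail a b (k + 1) := by
    intro k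
    rw [tail, tail, ← (summable_tail_terms htr k).tsum_add (summable_tail_terms htr (k + 1))]
    refine Summable.tsum_le_tsum (fun i => ?_)
      ((summable_coeffNorm htr).comp_injective (add_right_injective _))
      ((summable_tail_terms htr k).add (summable_tail_terms htr (k + 1)))
    simpa [add_right_comm k 1 i] using coeffNorm_succ_le (a := a) (b := b) (k + i)
  rcases n with _ | k
  · simp only [zero_add]
    rw [(summable_coeffNorm htr).tsum_eq_zero_add, coeffNorm_zero]
    have := hsucc 0
    simp only [zero_add, add_comm 1] at this
    linarith [tail_eq_add htr 0]
  · simpa using (hsucc k).trans (by linarith [tail_antitone htr k.le_succ])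

lemma inv_sub_self_ne_zero (hζ : ζ ≠ 0) (hp : ζ ≠ 1) (hm : ζ ≠ -1) : ζ⁻¹ - ζ ≠ 0 := by
  intro h
  have h2 : ζ * ζ = 1 := by nth_rw 2 [← sub_eq_zero.1 h]; exact mul_inv_cancel₀ hζ
  rcases mul_self_eq_one_iff.1 h2 with h | h
  exacts [hp h, hm h]

/-- `ζ^d (ζ^{-d} - ζ^d) / ((ζ⁻¹ - ζ) / 2)`: the free Green's function at distance `d`, rescaled by
the decay `ζ^d` of the Jost solution. -/
def kernel (ζ : ℂ) (d : ℕ) : ℂ := 2 * (1 - ζ ^ (2 * d)) / (ζ⁻¹ - ζ)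

lemma kernel_zero : kernel ζ 0 = 0 := by simp [kernel]

lemma inv_mul_kernel_one (hζ : ζ ≠ 0) (hβ : ζ⁻¹ - ζ ≠ 0) : ζ⁻¹ * kernel ζ 1 = 2 := by
  rw [kernel, mul_one, show 1 - ζ ^ 2 = ζ * (ζ⁻¹ - ζ) by field_simp, mul_div_assoc,
    mul_div_cancel_right₀ _ hβ]
  field_simp

lemma kernel_recurrence (hζ : ζ ≠ 0) (d : ℕ) :
    ζ⁻¹ * kernel ζ (d + 2) + ζ * kernel ζ d = (ζ + ζ⁻¹) * kernel ζ (d + 1) := by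
  unfold kernel
  field_simp
  ring

lemma norm_kernel_le (hζ1 : ‖ζ‖ ≤ 1) (d : ℕ) : ‖kernel ζ d‖ ≤ 4 / ‖ζ⁻¹ - ζ‖ := by
  rw [kernel, norm_div, norm_mul, Complex.norm_two]
  gcongr
  calc 2 * ‖1 - ζ ^ (2 * d)‖ ≤ 2 * (‖(1 : ℂ)‖ + ‖ζ ^ (2 * d)‖) := by gcongr; exact norm_sub_le _ _
    _ ≤ 2 * (1 + 1) := by
      rw [norm_one, norm_pow]
      gcongr
      exact pow_le_one₀ (norm_nonneg _) hζ1
    _ = 4 := by norm_num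

def kernelSum (ζ : ℂ) (k : ℕ) (h : ℕ → ℂ) (n : ℕ) : ℂ := ∑' i, kernel ζ (i + k) * h (n + i)

section KernelSum

variable {h : ℕ → ℂ}

lemma summable_norm_kernel_mul (hζ1 : ‖ζ‖ ≤ 1) (hh : Summable fun m => ‖h m‖) (k n : ℕ) :
    Summable fun i => ‖kernel ζ (i + k) * h (n + i)‖ :=
  Summable.of_nonneg_of_le (fun _ => norm_nonneg _)
    (fun i => by
      rw [norm_mul]
      exact mul_le_mul_of_nonneg_right (norm_kernel_le hζ1 _) (norm_nonneg _))
    ((hh.comp_injective (add_right_injective n)).mul_left (4 / ‖ζ⁻¹ - ζ‖))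

lemma norm_kernelSum_le (hζ1 : ‖ζ‖ ≤ 1) (hh : Summable fun m => ‖h m‖) (k n : ℕ) :
    ‖kernelSum ζ k h n‖ ≤ 4 / ‖ζ⁻¹ - ζ‖ * ∑' i, ‖h (n + i)‖ := by
  rw [← tsum_mul_left]
  refine (norm_tsum_le_tsum_norm (summable_norm_kernel_mul hζ1 hh k n)).trans
    (Summable.tsum_le_tsum (fun i => ?_) (summable_norm_kernel_mul hζ1 hh k n)
      ((hh.comp_injective (add_right_injective n)).mul_left _))
  rw [norm_mul]
  exact mul_le_mul_of_nonneg_right (norm_kernel_le hζ1 _) (norm_nonneg _)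

lemma kernelSum_eq_add (hζ1 : ‖ζ‖ ≤ 1) (hh : Summable fun m => ‖h m‖) (k n : ℕ) :
    kernelSum ζ k h n = kernel ζ k * h n + kernelSum ζ (k + 1) h (n + 1) := by
  rw [kernelSum, (summable_norm_kernel_mul hζ1 hh k n).of_norm.tsum_eq_zero_add, kernelSum]
  simp only [zero_add, add_zero]
  congr 1
  exact tsum_congr fun i => by rw [add_right_comm i 1 k, add_assoc, add_right_comm n 1 i, add_assoc]

lemma kernelSum_sub (hζ1 : ‖ζ‖ ≤ 1) {h' : ℕ → ℂ} (hh : Summable fun m => ‖h m‖)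
    (hh' : Summable fun m => ‖h' m‖) (k n : ℕ) :
    kernelSum ζ k h n - kernelSum ζ k h' n = kernelSum ζ k (h - h') n := by
  rw [kernelSum, kernelSum, kernelSum, ← (summable_norm_kernel_mul hζ1 hh k n).of_norm.tsum_sub
    (summable_norm_kernel_mul hζ1 hh' k n).of_norm]
  exact tsum_congr fun i => by simp [mul_sub]

/-- The tails cancel by `kernel_recurrence`; of the first terms only `ζ⁻¹ κ₁ h_n = 2 h_n`
survives, since `κ₀ = 0`. -/
lemma kernelSum_one_recurrence (hζ : ζ ≠ 0) (hβ : ζ⁻¹ - ζ ≠ 0) (hζ1 : ‖ζ‖ ≤ 1)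
    (hh : Summable fun m => ‖h m‖) (n : ℕ) :
    ζ⁻¹ * kernelSum ζ 1 h n + ζ * kernelSum ζ 1 h (n + 2) - (ζ + ζ⁻¹) * kernelSum ζ 1 h (n + 1)
      = 2 * h n := by
  have htail : ζ⁻¹ * kernelSum ζ 3 h (n + 2) + ζ * kernelSum ζ 1 h (n + 2)
      = (ζ + ζ⁻¹) * kernelSum ζ 2 h (n + 2) := by
    simp only [kernelSum]
    rw [← tsum_mul_left, ← tsum_mul_left, ← tsum_mul_left,
      ← (summable_norm_kernel_mul hζ1 hh 3 (n + 2)).of_norm.mul_left _ |>.tsum_add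
        ((summable_norm_kernel_mul hζ1 hh 1 (n + 2)).of_norm.mul_left _)]
    exact tsum_congr fun i => by linear_combination h (n + 2 + i) * kernel_recurrence hζ (i + 1)
  have h12 := kernel_recurrence hζ 0
  rw [kernel_zero, mul_zero, add_zero] at h12
  rw [kernelSum_eq_add hζ1 hh 1 n, kernelSum_eq_add hζ1 hh 2 (n + 1),
    kernelSum_eq_add hζ1 hh 1 (n + 1)]
  linear_combination htail + h n * inv_mul_kernel_one hζ hβ + h (n + 1) * h12

end KernelSum

/-- `f_k = ζ^k g_{k+1}` for `k ≥ -1`: the index `0` of `g` carries `f_{-1}`. -/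
def seqOfScaled (ζ : ℂ) (g : ℕ → ℂ) : ℤ → ℂ := fun k => ζ ^ k * g (k + 1).toNat

/-- `ζ^{-m} (V f)_m` for `f = seqOfScaled ζ g`. -/
def scaledPerturbation (a b : ℕ → ℝ) (ζ : ℂ) (g : ℕ → ℂ) (m : ℕ) : ℂ :=
  ((aext a ((m : ℤ) - 1) - 1/2 : ℝ) : ℂ) * ζ⁻¹ * g m + (b m : ℂ) * g (m + 1)
    + ((a m - 1/2 : ℝ) : ℂ) * ζ * g (m + 2)

lemma seqOfScaled_natCast_mul_zpow (hζ : ζ ≠ 0) (g : ℕ → ℂ) (n : ℕ) :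
    seqOfScaled ζ g n * ζ ^ (-(n : ℤ)) = g (n + 1) := by
  rw [seqOfScaled, mul_right_comm, ← zpow_add₀ hζ, add_neg_cancel, zpow_zero, one_mul]
  rfl

lemma jV_seqOfScaled (hζ : ζ ≠ 0) (g : ℕ → ℂ) (n : ℕ) :
    jV a b (seqOfScaled ζ g) n = ζ ^ n * scaledPerturbation a b ζ g n := by
  have e1 : ((n : ℤ) - 1 + 1).toNat = n := by simp
  have e2 : ((n : ℤ) + 1).toNat = n + 1 := by omega
  have e3 : ((n : ℤ) + 1 + 1).toNat = n + 2 := by omega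
  simp only [jV, scaledPerturbation, seqOfScaled, e1, e2, e3, zpow_sub_one₀ hζ, zpow_add_one₀ hζ,
    zpow_natCast]
  ring

lemma scaledPerturbation_sub (g g' : ℕ → ℂ) (m : ℕ) :
    scaledPerturbation a b ζ g m - scaledPerturbation a b ζ g' m
      = scaledPerturbation a b ζ (g - g') m := by
  simp only [scaledPerturbation, Pi.sub_apply]
  ring

lemma norm_scaledPerturbation_le (hζ : ζ ≠ 0) (hζ1 : ‖ζ‖ ≤ 1) {g : ℕ → ℂ} {M : ℝ}
    (hg : ∀ m, ‖g m‖ ≤ M) (m : ℕ) :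
    ‖scaledPerturbation a b ζ g m‖ ≤ ‖ζ‖⁻¹ * coeffNorm a b m * M := by
  have hM : 0 ≤ M := (norm_nonneg _).trans (hg 0)
  have hinv : 1 ≤ ‖ζ‖⁻¹ := one_le_inv₀ (norm_pos_iff.2 hζ) |>.2 hζ1
  have h1 : ‖ζ‖ * ‖g (m + 2)‖ ≤ ‖ζ‖⁻¹ * M := by
    nlinarith [hg (m + 2), norm_nonneg ζ, norm_nonneg (g (m + 2))]
  have h2 : ‖g (m + 1)‖ ≤ ‖ζ‖⁻¹ * M := by nlinarith [hg (m + 1)]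
  have h3 : ‖ζ⁻¹‖ * ‖g m‖ ≤ ‖ζ‖⁻¹ * M := by
    rw [norm_inv]; exact mul_le_mul_of_nonneg_left (hg m) (by positivity)
  unfold scaledPerturbation coeffNorm
  refine (norm_add₃_le ..).trans ?_
  simp only [mul_assoc, norm_mul, Complex.norm_real, Real.norm_eq_abs]
  linarith [mul_le_mul_of_nonneg_left h3 (abs_nonneg (aext a ((m : ℤ) - 1) - 1/2)),
    mul_le_mul_of_nonneg_left h2 (abs_nonneg (b m)),
    mul_le_mul_of_nonneg_left h1 (abs_nonneg (a m - 1/2))]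

lemma summable_norm_scaledPerturbation (htr : Summable fun n : ℕ => |a n - 1/2| + |b n|)
    (hζ : ζ ≠ 0) (hζ1 : ‖ζ‖ ≤ 1) {g : ℕ → ℂ} {M : ℝ} (hg : ∀ m, ‖g m‖ ≤ M) :
    Summable fun m => ‖scaledPerturbation a b ζ g m‖ :=
  Summable.of_nonneg_of_le (fun _ => norm_nonneg _) (norm_scaledPerturbation_le hζ hζ1 hg)
    (((summable_coeffNorm htr).mul_left _).mul_right M)

def volterra (a b : ℕ → ℝ) (ζ : ℂ) (g : ℕ → ℂ) : ℕ → ℂ :=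
  kernelSum ζ 1 (scaledPerturbation a b ζ g)

def jostConst (ζ : ℂ) : ℝ := 8 / (‖ζ‖ * ‖ζ⁻¹ - ζ‖)

lemma norm_volterra_le (htr : Summable fun n : ℕ => |a n - 1/2| + |b n|) (hζ : ζ ≠ 0)
    (hζ1 : ‖ζ‖ ≤ 1) {g : ℕ → ℂ} {M : ℝ} (hg : ∀ m, ‖g m‖ ≤ M) (n : ℕ) :
    ‖volterra a b ζ g n‖ ≤ jostConst ζ * tail a b (n - 1) * M := by
  have hM : 0 ≤ M := (norm_nonneg _).trans (hg 0)
  have hs := summable_norm_scaledPerturbation htr hζ hζ1 hg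
  calc ‖volterra a b ζ g n‖
      ≤ 4 / ‖ζ⁻¹ - ζ‖ * ∑' i, ‖scaledPerturbation a b ζ g (n + i)‖ := norm_kernelSum_le hζ1 hs 1 n
    _ ≤ 4 / ‖ζ⁻¹ - ζ‖ * ∑' i, ‖ζ‖⁻¹ * coeffNorm a b (n + i) * M := by
      refine mul_le_mul_of_nonneg_left (Summable.tsum_le_tsum
        (fun i => norm_scaledPerturbation_le hζ hζ1 hg _)
        (hs.comp_injective (add_right_injective n))
        ((((summable_coeffNorm htr).comp_injective (add_right_injective n)).mul_left _).mul_right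
          M)) (by positivity)
    _ = 4 / ‖ζ⁻¹ - ζ‖ * ‖ζ‖⁻¹ * M * ∑' i, coeffNorm a b (n + i) := by
      rw [tsum_mul_right, tsum_mul_left]; ring
    _ ≤ 4 / ‖ζ⁻¹ - ζ‖ * ‖ζ‖⁻¹ * M * (2 * tail a b (n - 1)) := by
      gcongr; exact tsum_coeffNorm_le htr n
    _ = jostConst ζ * tail a b (n - 1) * M := by rw [jostConst]; field_simp; ring

lemma volterra_sub (htr : Summable fun n : ℕ => |a n - 1/2| + |b n|) (hζ : ζ ≠ 0)
    (hζ1 : ‖ζ‖ ≤ 1) {g g' : ℕ → ℂ} {M M' : ℝ} (hg : ∀ m, ‖g m‖ ≤ M) (hg' : ∀ m, ‖g' m‖ ≤ M')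
    (n : ℕ) : volterra a b ζ g n - volterra a b ζ g' n = volterra a b ζ (g - g') n := by
  rw [volterra, volterra, kernelSum_sub hζ1 (summable_norm_scaledPerturbation htr hζ hζ1 hg)
    (summable_norm_scaledPerturbation htr hζ hζ1 hg'), volterra]
  congr 1
  exact funext (scaledPerturbation_sub g g')

lemma norm_volterra_le_half (htr : Summable fun n : ℕ => |a n - 1/2| + |b n|) (hζ : ζ ≠ 0)
    (hζ1 : ‖ζ‖ ≤ 1) (hsmall : jostConst ζ * tail a b 0 ≤ 1/2) {g : ℕ → ℂ} {M : ℝ}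
    (hg : ∀ m, ‖g m‖ ≤ M) (n : ℕ) : ‖volterra a b ζ g n‖ ≤ 1/2 * M := by
  have hK : 0 ≤ jostConst ζ := by unfold jostConst; positivity
  refine (norm_volterra_le htr hζ hζ1 hg n).trans
    (mul_le_mul_of_nonneg_right ?_ ((norm_nonneg _).trans (hg 0)))
  exact (mul_le_mul_of_nonneg_left (tail_antitone htr (Nat.zero_le _)) hK).trans hsmall

/-- For a small tail, `g ↦ 1 - volterra g` is a `1/2`-contraction of the bounded sequences. -/
lemma exists_eq_one_sub_volterra (htr : Summable fun n : ℕ => |a n - 1/2| + |b n|)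
    (hζ : ζ ≠ 0) (hζ1 : ‖ζ‖ ≤ 1) (hsmall : jostConst ζ * tail a b 0 ≤ 1/2) :
    ∃ g : ℕ →ᵇ ℂ, ∀ n, g n = 1 - volterra a b ζ g n := by
  have hvol (g : ℕ →ᵇ ℂ) (n : ℕ) : ‖volterra a b ζ g n‖ ≤ 1/2 * ‖g‖ :=
    norm_volterra_le_half htr hζ hζ1 hsmall g.norm_coe_le_norm n
  let Φ : (ℕ →ᵇ ℂ) → (ℕ →ᵇ ℂ) := fun g =>
    .ofNormedAddCommGroupDiscrete (fun n => 1 - volterra a b ζ g n) (1 + 1/2 * ‖g‖) fun n =>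
      (norm_sub_le _ _).trans (by rw [norm_one]; linarith [hvol g n])
  have hΦ : ContractingWith (1/2) Φ := by
    refine ⟨by rw [one_div, inv_lt_one₀ (by norm_num)]; norm_num,
      LipschitzWith.of_dist_le_mul fun g g' => ?_⟩
    refine (BoundedContinuousFunction.dist_le (by positivity)).2 fun n => ?_
    rw [dist_eq_norm, dist_eq_norm, norm_sub_rev g]
    change ‖(1 - volterra a b ζ g n) - (1 - volterra a b ζ g' n)‖ ≤ _
    rw [sub_sub_sub_cancel_left, volterra_sub htr hζ hζ1 g'.norm_coe_le_norm g.norm_coe_le_norm,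
      ← BoundedContinuousFunction.coe_sub]
    simpa using hvol (g' - g) n
  exact ⟨ContractingWith.fixedPoint Φ hΦ, fun n =>
    (DFunLike.congr_fun (hΦ.fixedPoint_isFixedPt) n).symm⟩

lemma isJacobiSol_seqOfScaled (htr : Summable fun n : ℕ => |a n - 1/2| + |b n|) (hζ : ζ ≠ 0)
    (hβ : ζ⁻¹ - ζ ≠ 0) (hζ1 : ‖ζ‖ ≤ 1) {g : ℕ → ℂ} {M : ℝ} (hg : ∀ m, ‖g m‖ ≤ M)
    (hfix : ∀ n, g n = 1 - volterra a b ζ g n) :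
    IsJacobiSol a b ((ζ + ζ⁻¹) / 2) (seqOfScaled ζ g) := by
  intro n
  change JacobiEqAt _ _ _ _ n
  have hrec := kernelSum_one_recurrence hζ hβ hζ1
    (summable_norm_scaledPerturbation htr hζ hζ1 hg) n
  have e1 : seqOfScaled ζ g ((n : ℤ) - 1) = ζ ^ n * ζ⁻¹ * g n := by
    simp [seqOfScaled, zpow_sub_one₀ hζ]
  have e2 : seqOfScaled ζ g ((n : ℤ) + 1) = ζ ^ n * ζ * g (n + 2) := by
    simp [seqOfScaled, zpow_add_one₀ hζ, show ((n : ℤ) + 1 + 1).toNat = n + 2 by omega]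
  have e0 : seqOfScaled ζ g n = ζ ^ n * g (n + 1) := by simp [seqOfScaled]
  rw [jacobiEqAt_iff_jV, jV_seqOfScaled hζ, e1, e2, e0, hfix n, hfix (n + 1), hfix (n + 2)]
  unfold volterra
  linear_combination (-ζ ^ n / 2) * hrec

theorem exists_isJacobiSol_of_tail_small (htr : Summable fun n : ℕ => |a n - 1/2| + |b n|)
    (hζ : ζ ≠ 0) (hζ1 : ‖ζ‖ ≤ 1) (hβ : ζ⁻¹ - ζ ≠ 0) (hsmall : jostConst ζ * tail a b 0 ≤ 1/2) :
    ∃ f : ℤ → ℂ, IsJacobiSol a b ((ζ + ζ⁻¹) / 2) f ∧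
      ∀ n : ℕ, ‖f n * ζ ^ (-(n : ℤ)) - 1‖ ≤ 2 * jostConst ζ * tail a b n := by
  obtain ⟨g, hg⟩ := exists_eq_one_sub_volterra htr hζ hζ1 hsmall
  have hg2 : ‖g‖ ≤ 2 := by
    have : ‖g‖ ≤ 1 + 1/2 * ‖g‖ := (BoundedContinuousFunction.norm_le (by positivity)).2 fun n => by
      rw [hg n]
      refine (norm_sub_le _ _).trans ?_
      rw [norm_one]
      linarith [norm_volterra_le_half htr hζ hζ1 hsmall g.norm_coe_le_norm n]
    linarith
  refine ⟨seqOfScaled ζ g, isJacobiSol_seqOfScaled htr hζ hβ hζ1 g.norm_coe_le_norm hg,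
    fun n => ?_⟩
  rw [seqOfScaled_natCast_mul_zpow hζ, hg, sub_sub_cancel_left, norm_neg]
  calc ‖volterra a b ζ g (n + 1)‖ ≤ jostConst ζ * tail a b n * ‖g‖ :=
        norm_volterra_le htr hζ hζ1 g.norm_coe_le_norm (n + 1)
    _ ≤ jostConst ζ * tail a b n * 2 := by
        gcongr
        · exact mul_nonneg (by unfold jostConst; positivity) (tail_nonneg n)
    _ = 2 * jostConst ζ * tail a b n := by ring

lemma exists_pos_forall_le_mul {e ρ : ℕ → ℝ} {N : ℕ} {C δ : ℝ} (hC : 0 ≤ C) (hδ : 0 < δ)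
    (hρ : ∀ n, 0 ≤ ρ n) (hlow : ∀ n < N, δ ≤ ρ n) (hhigh : ∀ n, N ≤ n → e n ≤ C * ρ n) :
    ∃ C', 0 < C' ∧ ∀ n, e n ≤ C' * ρ n := by
  set S := ∑ m ∈ range N, |e m|
  have hS : 0 ≤ S := sum_nonneg fun _ _ => abs_nonneg _
  refine ⟨C + S / δ + 1, by positivity, fun n => ?_⟩
  rcases lt_or_ge n N with hn | hn
  · calc e n ≤ S := (le_abs_self _).trans (single_le_sum (fun m _ => abs_nonneg (e m))
          (mem_range.2 hn))
      _ = S / δ * δ := by field_simp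
      _ ≤ (C + S / δ + 1) * ρ n := by nlinarith [hlow n hn, hρ n, div_nonneg hS hδ.le]
  · nlinarith [hhigh n hn, mul_nonneg (by positivity : 0 ≤ S / δ + 1) (hρ n)]

theorem exists_isJacobiSol_norm_sub_one_le (ha : ∀ n, 0 < a n)
    (htr : Summable fun n : ℕ => |a n - 1/2| + |b n|) (hζ : ζ ≠ 0) (hζ1 : ‖ζ‖ ≤ 1)
    (hβ : ζ⁻¹ - ζ ≠ 0) :
    ∃ (f : ℤ → ℂ) (C : ℝ), 0 < C ∧ IsJacobiSol a b ((ζ + ζ⁻¹) / 2) f ∧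
      ∀ n : ℕ, ‖f n * ζ ^ (-(n : ℤ)) - 1‖ ≤ C * tail a b n := by
  have hK : 0 < jostConst ζ := by unfold jostConst; have := norm_pos_iff.2 hβ; positivity
  have hex : ∃ N, jostConst ζ * tail a b N ≤ 1/2 := by
    obtain ⟨N, hN⟩ := ((tendsto_tail (a := a) (b := b)).eventually
      (gt_mem_nhds (by positivity : 0 < 1/2 / jostConst ζ))).exists
    exact ⟨N, ((lt_div_iff₀' hK).1 hN).le⟩
  set N := Nat.find hex
  have hN : jostConst ζ * tail a b N ≤ 1/2 := Nat.find_spec hex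
  obtain ⟨f, hf, hfbd⟩ := exists_isJacobiSol_of_tail_small (a := fun m => a (N + m))
    (b := fun m => b (N + m)) (summable_tail_terms htr N) hζ hζ1 hβ (by simpa [tail_shift] using hN)
  obtain ⟨v, hv, hvf⟩ := exists_isJacobiSol_eq_of_forall_le ha _ (N + 1)
    (fun k => ζ ^ (N : ℤ) * f (k - N)) fun n hn => jacobiEqAt_of_shift hf _ hn
  have hlow : ∀ n < N, 1 / (2 * jostConst ζ) ≤ tail a b n := fun n hn => by
    rw [div_le_iff₀ (by positivity)]
    linarith [Nat.find_min hex hn]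
  have hhigh : ∀ n, N ≤ n →
      ‖v n * ζ ^ (-(n : ℤ)) - 1‖ ≤ 2 * jostConst ζ * tail a b n := fun n hn => by
    obtain ⟨k, rfl⟩ := Nat.exists_eq_add_of_le hn
    rw [hvf _ (by push_cast; omega)]
    have : ζ ^ (N : ℤ) * f ((N + k : ℕ) - N) * ζ ^ (-((N + k : ℕ) : ℤ)) = f k * ζ ^ (-(k : ℤ)) := by
      rw [mul_right_comm, ← zpow_add₀ hζ]
      push_cast
      ring_nf
    rw [this, ← tail_shift]
    exact hfbd k
  obtain ⟨C, hC, hbound⟩ := exists_pos_forall_le_mul (mul_pos two_pos hK).le (by positivity)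
    tail_nonneg hlow hhigh
  exact ⟨v, C, hC, hv, hbound⟩

end Jost

/-- existence of the Jost solution `f_n = ζⁿ (1 + O(ρ_n))` under the
trace class condition. -/
theorem jost_solution_exists
    (a b : ℕ → ℝ) (ha : ∀ n, 0 < a n)
    (htr : Summable (fun n : ℕ => |a n - 1/2| + |b n|))
    (ζ : ℂ) (hζ0 : 0 < ‖ζ‖) (hζ1 : ‖ζ‖ ≤ 1) (hζp : ζ ≠ 1) (hζm : ζ ≠ -1)
    (z : ℂ) (hz : z = (ζ + ζ⁻¹) / 2)
    (ρ : ℕ → ℝ) (hρ : ∀ n, ρ n = ∑' m : ℕ, (|a (n + m) - 1/2| + |b (n + m)|)) :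
    ∃ (f : ℤ → ℂ) (C : ℝ), 0 < C ∧ IsJacobiSol a b z f ∧
      ∀ n : ℕ, ‖f (n : ℤ) * ζ ^ (-(n : ℤ)) - 1‖ ≤ C * ρ n := by
  have hζ : ζ ≠ 0 := norm_pos_iff.1 hζ0
  obtain rfl : ρ = Jost.tail a b := funext hρ
  subst hz
  exact Jost.exists_isJacobiSol_norm_sub_one_le ha htr hζ hζ1
    (Jost.inv_sub_self_ne_zero hζ hζp hζm)
end
end

section
/- Let ζ ∈ ℂ with 0 < |ζ| ≤ 1, ζ ∉ {1, -1}, set z = (ζ + ζ⁻¹)/2 and √(z² - 1) := (ζ⁻¹ - ζ)/2. Let f = (f_n)_{n≥-1} be a sequence of complex numbers such that ∑_{m≥0} |ζ|^{-m} |(Vf)_m| < ∞, where (Vf)_m = (a_{m-1} - 1/2) f_{m-1} + b_m f_m + (a_m - 1/2) f_{m+1} (with a_{-1} = 1/2). If f satisfies the discrete Volterra equation f_n = ζⁿ - (1/√(z² - 1)) ∑_{m≥n+1} (ζ^{n-m} - ζ^{m-n}) (Vf)_m for every n ≥ -1, then f is a solution of the Jacobi equation at spectral parameter z. -/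
open Filter Finset MeasureTheory

noncomputable section

/-!
Both `ζ^n` and `ζ^{-n}` solve the free equation `u_{n-1} + u_{n+1} = (ζ + ζ⁻¹) u_n`, hence so does
the kernel `ζ^{n-m} - ζ^{m-n}` as a function of `n`; cutting it off at `m > n` leaves a defect only
at `m = n`, equal to `ζ⁻¹ - ζ = 2 √(z² - 1)`. Applying the free operator to the Volterra equation
therefore gives `(H₀ - z) f = -V f`, which is the Jacobi equation `(H - z) f = 0`. The weight
`|ζ|^{-m}` makes all the sums absolutely convergent, so they may be combined termwise.
-/

section Algebra

variable {K : Type*} [Field K] {ζ : K}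

theorem zpow_sub_one_add_zpow_add_one (hζ : ζ ≠ 0) (k : ℤ) :
    ζ ^ (k - 1) + ζ ^ (k + 1) = (ζ + ζ⁻¹) * ζ ^ k := by
  rw [zpow_sub_one₀ hζ, zpow_add_one₀ hζ]
  ring

theorem inv_sub_self_ne_zero (hζ : ζ ≠ 0) (h1 : ζ ≠ 1) (hm1 : ζ ≠ -1) : ζ⁻¹ - ζ ≠ 0 := by
  intro h
  have : (1 - ζ) * (1 + ζ) = 0 := by
    field_simp at h
    linear_combination h
  rcases mul_eq_zero.mp this with h' | h'
  · exact h1 (by linear_combination -h')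
  · exact hm1 (by linear_combination h')

def volterraKernel (ζ : K) (n : ℤ) (m : ℕ) : K :=
  if n + 1 ≤ (m : ℤ) then ζ ^ (n - m) - ζ ^ ((m : ℤ) - n) else 0

theorem volterraKernel_jacobi (hζ : ζ ≠ 0) (n m : ℕ) :
    volterraKernel ζ (n - 1) m + volterraKernel ζ (n + 1) m - (ζ + ζ⁻¹) * volterraKernel ζ n m
      = if m = n then ζ⁻¹ - ζ else 0 := by
  unfold volterraKernel
  rcases lt_trichotomy m n with hlt | rfl | hgt
  · simp only [if_neg (by omega : ¬ (n : ℤ) - 1 + 1 ≤ m), if_neg (by omega : ¬ (n : ℤ) + 1 + 1 ≤ m),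
      if_neg (by omega : ¬ (n : ℤ) + 1 ≤ m), if_neg hlt.ne]
    ring
  · simp
  · -- at `m = n + 1` the middle term vanishes anyway, since `ζ^0 - ζ^0 = 0`
    have hnext : (if (n : ℤ) + 1 + 1 ≤ m then ζ ^ ((n : ℤ) + 1 - m) - ζ ^ ((m : ℤ) - (n + 1)) else 0)
        = ζ ^ ((n : ℤ) - m + 1) - ζ ^ ((m : ℤ) - n - 1) := by
      split_ifs with h
      · ring_nf
      · obtain rfl : m = n + 1 := by omega
        simp
    rw [hnext, if_pos (by omega), if_pos (by omega), if_neg hgt.ne',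
      show (n : ℤ) - 1 - m = n - m - 1 by ring, show (m : ℤ) - (n - 1) = m - n + 1 by ring]
    linear_combination zpow_sub_one_add_zpow_add_one hζ ((n : ℤ) - m)
      - zpow_sub_one_add_zpow_add_one hζ ((m : ℤ) - n)

end Algebra

section Analysis

variable {K : Type*} [NormedField K] {ζ : K}

theorem norm_volterraKernel_le (hζ : ζ ≠ 0) (hζ1 : ‖ζ‖ ≤ 1) (n : ℤ) (m : ℕ) :
    ‖volterraKernel ζ n m‖ ≤ 2 * ‖ζ‖ ^ n * ‖ζ‖ ^ (-(m : ℤ)) := by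
  have hζ0 : 0 < ‖ζ‖ := norm_pos_iff.mpr hζ
  unfold volterraKernel
  split_ifs with h
  · calc ‖ζ ^ (n - m) - ζ ^ ((m : ℤ) - n)‖
        ≤ ‖ζ‖ ^ (n - m) + ‖ζ‖ ^ ((m : ℤ) - n) := by
          simpa only [norm_zpow] using norm_sub_le (ζ ^ (n - m)) (ζ ^ ((m : ℤ) - n))
      _ ≤ ‖ζ‖ ^ (n - m) + ‖ζ‖ ^ (n - m) := by
          grw [(zpow_le_one₀ hζ0 hζ1 (by omega : (0 : ℤ) ≤ m - n)).trans
            (one_le_zpow_of_nonpos₀ hζ0 hζ1 (by omega : n - m ≤ 0))]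
      _ = 2 * ‖ζ‖ ^ n * ‖ζ‖ ^ (-(m : ℤ)) := by
          rw [sub_eq_add_neg, zpow_add₀ hζ0.ne']
          ring
  · rw [norm_zero]
    positivity

theorem summable_volterraKernel_mul [CompleteSpace K] (hζ : ζ ≠ 0) (hζ1 : ‖ζ‖ ≤ 1) {V : ℕ → K}
    (hV : Summable fun m : ℕ => ‖ζ‖ ^ (-(m : ℤ)) * ‖V m‖) (n : ℤ) :
    Summable fun m => volterraKernel ζ n m * V m := by
  refine .of_norm_bounded (hV.mul_left (2 * ‖ζ‖ ^ n)) fun m => ?_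
  rw [norm_mul, ← mul_assoc]
  gcongr
  exact norm_volterraKernel_le hζ hζ1 n m

def volterraSum (ζ : K) (V : ℕ → K) (n : ℤ) : K :=
  ∑' m, volterraKernel ζ n m * V m

theorem volterraSum_jacobi [CompleteSpace K] (hζ : ζ ≠ 0) (hζ1 : ‖ζ‖ ≤ 1) {V : ℕ → K}
    (hV : Summable fun m : ℕ => ‖ζ‖ ^ (-(m : ℤ)) * ‖V m‖) (n : ℕ) :
    volterraSum ζ V (n - 1) + volterraSum ζ V (n + 1) - (ζ + ζ⁻¹) * volterraSum ζ V n
      = (ζ⁻¹ - ζ) * V n := by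
  have hs := summable_volterraKernel_mul hζ hζ1 hV
  unfold volterraSum
  rw [← (hs _).tsum_add (hs _), ← tsum_mul_left, ← ((hs _).add (hs _)).tsum_sub ((hs _).mul_left _)]
  calc ∑' m, (volterraKernel ζ (n - 1) m * V m + volterraKernel ζ (n + 1) m * V m
        - (ζ + ζ⁻¹) * (volterraKernel ζ n m * V m))
      = ∑' m, if m = n then (ζ⁻¹ - ζ) * V m else 0 := by
        refine tsum_congr fun m => ?_
        rw [← ite_zero_mul, ← volterraKernel_jacobi hζ n m]
        ring
    _ = (ζ⁻¹ - ζ) * V n := tsum_ite_eq n _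

end Analysis

theorem volterra_implies_jacobi_general
    (a b : ℕ → ℝ)
    (ζ : ℂ) (hζ0 : 0 < ‖ζ‖) (hζ1 : ‖ζ‖ ≤ 1) (hζp : ζ ≠ 1) (hζm : ζ ≠ -1)
    (z sq : ℂ) (hz : z = (ζ + ζ⁻¹) / 2) (hsq : sq = (ζ⁻¹ - ζ) / 2)
    (f : ℤ → ℂ)
    (hsum : Summable (fun m : ℕ => ‖ζ‖ ^ (-(m : ℤ)) * ‖jV a b f m‖))
    (hvolt : ∀ n : ℤ, -1 ≤ n →
      f n = ζ ^ n - (1 / sq) * ∑' m : ℕ,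
        (if n + 1 ≤ (m : ℤ) then (ζ ^ (n - (m : ℤ)) - ζ ^ ((m : ℤ) - n)) * jV a b f m else 0)) :
    IsJacobiSol a b z f := by
  have hζ : ζ ≠ 0 := norm_pos_iff.mp hζ0
  have hsq0 : sq ≠ 0 := by
    rw [hsq]
    exact div_ne_zero (inv_sub_self_ne_zero hζ hζp hζm) two_ne_zero
  have hf : ∀ n : ℤ, -1 ≤ n → f n = ζ ^ n - (1 / sq) * volterraSum ζ (jV a b f) n := by
    intro n hn
    simpa only [volterraSum, volterraKernel, ite_mul, zero_mul] using hvolt n hn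
  intro n
  have hfree : f (n - 1) + f (n + 1) - 2 * z * f n = -2 * jV a b f n := by
    rw [hf (n - 1) (by omega), hf n (by omega), hf (n + 1) (by omega), hz]
    linear_combination zpow_sub_one_add_zpow_add_one hζ (n : ℤ)
      - (1 / sq) * volterraSum_jacobi hζ hζ1 hsum n + 2 / sq * jV a b f n * hsq
      - 2 * jV a b f n * inv_mul_cancel₀ hsq0
  simp only [jV] at hfree
  push_cast at hfree ⊢
  linear_combination hfree / 2

/-- a solution of the discrete Volterra integral equation solves the
Jacobi equation at spectral parameter `z = (ζ + ζ⁻¹)/2`. -/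
theorem volterra_implies_jacobi
    (a b : ℕ → ℝ) (ha : ∀ n, 0 < a n)
    (ζ : ℂ) (hζ0 : 0 < ‖ζ‖) (hζ1 : ‖ζ‖ ≤ 1) (hζp : ζ ≠ 1) (hζm : ζ ≠ -1)
    (z sq : ℂ) (hz : z = (ζ + ζ⁻¹) / 2) (hsq : sq = (ζ⁻¹ - ζ) / 2)
    (f : ℤ → ℂ)
    (hsum : Summable (fun m : ℕ => ‖ζ‖ ^ (-(m : ℤ)) * ‖jV a b f m‖))
    (hvolt : ∀ n : ℤ, -1 ≤ n →
      f n = ζ ^ n - (1 / sq) * ∑' m : ℕ,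
        (if n + 1 ≤ (m : ℤ) then (ζ ^ (n - (m : ℤ)) - ζ ^ ((m : ℤ) - n)) * jV a b f m else 0)) :
    IsJacobiSol a b z f :=
  volterra_implies_jacobi_general a b ζ hζ0 hζ1 hζp hζm z sq hz hsq f hsum hvolt
end
end

section
/- Let α : ℕ → ℝ be nonnegative with ∑_{m≥0} α_m < ∞, let C > 0, and let G : ℕ × ℕ → ℂ satisfy |G(n,m)| ≤ C α_m for all n, m. Define iterates g⁽⁰⁾_n = 1 and g⁽ᵏ⁺¹⁾_n = ∑_{m≥n+1} G(n,m) g⁽ᵏ⁾_m. Then for every k ≥ 0 and every n ≥ 0 the defining series converges absolutely and |g⁽ᵏ⁾_n| ≤ (Cᵏ/k!) (∑_{m≥n+1} α_m)ᵏ. -/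
/-!
With `T n = ∑_{m > n} α m`, induction on `k` gives `‖g k n‖ ≤ Cᵏ / k! · (T n)ᵏ`. The inductive step
needs `∑_{m > n} α m · (T m)ᵏ ≤ (T n)^(k+1) / (k+1)`, a discrete form of `∫ (-T') Tᵏ = T^(k+1)/(k+1)`:
since `α (m+1) = T m - T (m+1)`, it follows by telescoping from the tangent-line inequality
`(k+1) bᵏ (a - b) ≤ a^(k+1) - b^(k+1)` for `0 ≤ b ≤ a`.
-/

open Filter Finset
open scoped Nat

noncomputable section

theorem add_one_mul_pow_mul_sub_le_pow_sub_pow {R : Type*} [CommRing R] [PartialOrder R]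
    [IsOrderedRing R] {a b : R} (hb : 0 ≤ b) (hba : b ≤ a) (k : ℕ) :
    (k + 1) * b ^ k * (a - b) ≤ a ^ (k + 1) - b ^ (k + 1) := by
  have hdiag : ∑ i ∈ range (k + 1), b ^ i * b ^ (k + 1 - 1 - i) = (k + 1) * b ^ k := by
    rw [sum_congr rfl fun i hi => by
      rw [← pow_add, Nat.add_sub_cancel, Nat.add_sub_cancel' (Nat.lt_succ_iff.mp (mem_range.mp hi))]]
    simp
  calc (k + 1) * b ^ k * (a - b)
      = (∑ i ∈ range (k + 1), b ^ i * b ^ (k + 1 - 1 - i)) * (a - b) := by rw [hdiag]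
    _ ≤ (∑ i ∈ range (k + 1), a ^ i * b ^ (k + 1 - 1 - i)) * (a - b) := by
      have := sub_nonneg.mpr hba
      gcongr
    _ = a ^ (k + 1) - b ^ (k + 1) := geom_sum₂_mul_of_ge hba (k + 1)

theorem summable_ite_add_one_le {E : Type*} [NormedAddCommGroup E] [CompleteSpace E]
    {f : ℕ → E} (hf : Summable f) (n : ℕ) :
    Summable fun m => if n + 1 ≤ m then f m else 0 :=
  (hf.indicator {m | n + 1 ≤ m}).congr fun m => by simp [Set.indicator_apply]

def tailSum (α : ℕ → ℝ) (n : ℕ) : ℝ :=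
  ∑' m, if n + 1 ≤ m then α m else 0

section tailSum

variable {α : ℕ → ℝ}

theorem tailSum_nonneg (hα : ∀ m, 0 ≤ α m) (n : ℕ) : 0 ≤ tailSum α n :=
  tsum_nonneg fun m => by split_ifs <;> simp [hα m]

theorem tailSum_eq_add_tailSum_succ (hsum : Summable α) (n : ℕ) :
    tailSum α n = α (n + 1) + tailSum α (n + 1) := by
  have hsplit : ∀ m, (if n + 1 ≤ m then α m else 0) =
      (if m = n + 1 then α (n + 1) else 0) + if n + 1 + 1 ≤ m then α m else 0 := by
    intro m
    split_ifs <;> simp_all <;> omega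
  rw [tailSum, tsum_congr hsplit, Summable.tsum_add (hasSum_ite_eq _ _).summable
    (summable_ite_add_one_le hsum _), (hasSum_ite_eq _ _).tsum_eq, tailSum]

theorem tailSum_antitone (hα : ∀ m, 0 ≤ α m) (hsum : Summable α) : Antitone (tailSum α) :=
  antitone_nat_of_succ_le fun n => by
    rw [tailSum_eq_add_tailSum_succ hsum n]
    linarith [hα (n + 1)]

theorem summable_ite_mul_tailSum_pow (hα : ∀ m, 0 ≤ α m) (hsum : Summable α) (n k : ℕ) :
    Summable fun m => if n + 1 ≤ m then α m * tailSum α m ^ k else 0 := by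
  refine (hsum.mul_right (tailSum α 0 ^ k)).of_nonneg_of_le (fun m => ?_) fun m => ?_
  · split_ifs
    · exact mul_nonneg (hα m) (pow_nonneg (tailSum_nonneg hα m) k)
    · rfl
  · split_ifs
    · gcongr
      · exact hα m
      · exact tailSum_nonneg hα m
      · exact tailSum_antitone hα hsum (Nat.zero_le m)
    · exact mul_nonneg (hα m) (pow_nonneg (tailSum_nonneg hα 0) k)

theorem tsum_ite_mul_tailSum_pow_le (hα : ∀ m, 0 ≤ α m) (hsum : Summable α) (n k : ℕ) :
    ∑' m, (if n + 1 ≤ m then α m * tailSum α m ^ k else 0) ≤ tailSum α n ^ (k + 1) / (k + 1) := by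
  set T := tailSum α with hT
  set f := fun m => if n + 1 ≤ m then α m * T m ^ k else 0
  have hT0 := tailSum_nonneg hα
  have hf0 : ∀ m, 0 ≤ f m := fun m => by
    simp only [f]; split_ifs
    · exact mul_nonneg (hα m) (pow_nonneg (hT0 m) k)
    · rfl
  -- `W` freezes the tail at `T n` before index `n`, so that `f (m + 1)` is bounded by a telescoping term.
  set W := fun m => T (max n m) ^ (k + 1) / (k + 1)
  have hstep : ∀ m, f (m + 1) ≤ W m - W (m + 1) := by
    intro m
    simp only [f, W]
    split_ifs with hm
    · rw [max_eq_right (by omega), max_eq_right (by omega), ← sub_div, le_div_iff₀ (by positivity)]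
      have hα' : α (m + 1) = T m - T (m + 1) := by
        rw [hT, tailSum_eq_add_tailSum_succ hsum m]; ring
      have := add_one_mul_pow_mul_sub_le_pow_sub_pow (hT0 (m + 1))
        (tailSum_antitone hα hsum m.le_succ) k
      rw [hα']
      linarith
    · rw [max_eq_left (by omega), max_eq_left (by omega), sub_self]
  refine Real.tsum_le_of_sum_range_le hf0 fun N => ?_
  calc ∑ m ∈ range N, f m ≤ ∑ m ∈ range (N + 1), f m :=
        sum_le_sum_of_subset_of_nonneg (range_subset_range.mpr N.le_succ) fun m _ _ => hf0 m
    _ = ∑ m ∈ range N, f (m + 1) := by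
        rw [sum_range_succ']
        simp [f]
    _ ≤ ∑ m ∈ range N, (W m - W (m + 1)) := sum_le_sum fun m _ => hstep m
    _ = W 0 - W N := sum_range_sub' W N
    _ ≤ T n ^ (k + 1) / (k + 1) := by
        have : 0 ≤ W N := by have := hT0 (max n N); positivity
        simp only [W, max_eq_left (Nat.zero_le n)]
        linarith

end tailSum

theorem summable_norm_volterra_and_norm_tsum_le {α : ℕ → ℝ} (hα : ∀ m, 0 ≤ α m)
    (hsum : Summable α) {C : ℝ} (hC : 0 ≤ C) {G : ℕ → ℕ → ℂ} (hG : ∀ n m, ‖G n m‖ ≤ C * α m)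
    {h : ℕ → ℂ} {k : ℕ} (hh : ∀ m, ‖h m‖ ≤ C ^ k / k ! * tailSum α m ^ k) (n : ℕ) :
    Summable (fun m => ‖if n + 1 ≤ m then G n m * h m else 0‖) ∧
      ‖∑' m, if n + 1 ≤ m then G n m * h m else 0‖ ≤
        C ^ (k + 1) / (k + 1)! * tailSum α n ^ (k + 1) := by
  have hD := summable_ite_mul_tailSum_pow hα hsum n k
  have hdom : ∀ m, ‖if n + 1 ≤ m then G n m * h m else 0‖ ≤
      C ^ (k + 1) / k ! * if n + 1 ≤ m then α m * tailSum α m ^ k else 0 := by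
    intro m
    split_ifs
    · calc ‖G n m * h m‖ ≤ C * α m * (C ^ k / k ! * tailSum α m ^ k) := by
            rw [norm_mul]
            exact mul_le_mul (hG n m) (hh m) (norm_nonneg _) (mul_nonneg hC (hα m))
        _ = C ^ (k + 1) / k ! * (α m * tailSum α m ^ k) := by ring
    · simp
  have hsummable := (hD.mul_left _).of_nonneg_of_le (fun m => norm_nonneg _) hdom
  refine ⟨hsummable, ?_⟩
  calc ‖∑' m, if n + 1 ≤ m then G n m * h m else 0‖
      ≤ ∑' m, ‖if n + 1 ≤ m then G n m * h m else 0‖ := norm_tsum_le_tsum_norm hsummable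
    _ ≤ C ^ (k + 1) / k ! * ∑' m, if n + 1 ≤ m then α m * tailSum α m ^ k else 0 := by
        rw [← tsum_mul_left]
        exact hsummable.tsum_le_tsum hdom (hD.mul_left _)
    _ ≤ C ^ (k + 1) / k ! * (tailSum α n ^ (k + 1) / (k + 1)) := by
        gcongr
        exact tsum_ite_mul_tailSum_pow_le hα hsum n k
    _ = C ^ (k + 1) / (k + 1)! * tailSum α n ^ (k + 1) := by
        rw [Nat.factorial_succ]
        push_cast
        field_simp

/-- bounds on the iterates of a discrete backward Volterra operator
with an ℓ¹ kernel majorant. -/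
theorem backward_volterra_iterates_bound
    (α : ℕ → ℝ) (hα : ∀ m, 0 ≤ α m) (hsum : Summable α)
    (C : ℝ) (hC : 0 < C)
    (G : ℕ → ℕ → ℂ) (hG : ∀ n m, ‖G n m‖ ≤ C * α m)
    (g : ℕ → ℕ → ℂ) (hg0 : ∀ n, g 0 n = 1)
    (hgrec : ∀ k n, g (k + 1) n = ∑' m : ℕ, (if n + 1 ≤ m then G n m * g k m else 0)) :
    ∀ k n : ℕ,
      Summable (fun m : ℕ => ‖(if n + 1 ≤ m then G n m * g k m else 0)‖) ∧
      ‖g k n‖ ≤ C ^ k / (Nat.factorial k : ℝ) *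
        (∑' m : ℕ, (if n + 1 ≤ m then α m else 0)) ^ k := by
  have hbound : ∀ k n, ‖g k n‖ ≤ C ^ k / k ! * tailSum α n ^ k := by
    intro k
    induction k with
    | zero => simp [hg0]
    | succ k ih =>
      intro n
      rw [hgrec]
      exact (summable_norm_volterra_and_norm_tsum_le hα hsum hC.le hG ih n).2
  exact fun k n => ⟨(summable_norm_volterra_and_norm_tsum_le hα hsum hC.le hG (hbound k) n).1,
    hbound k n⟩
end
end

section
/- Assume the trace class condition ∑_{n≥0}(|a_n - 1/2| + |b_n|) < ∞. Let ζ ∈ ℂ with 0 < |ζ| ≤ 1 and ζ ∉ {1, -1}, and set z = (ζ + ζ⁻¹)/2. Then there exists a constant C > 0 such that |P_n(z)| ≤ C |ζ|^{-n} for all n ≥ 0. -/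
/-!
With `2z = ζ + ζ⁻¹`, the Jacobi equation divided by `aₙ` is the free recurrence
`Pₙ₊₁ = (ζ + ζ⁻¹) Pₙ - Pₙ₋₁` perturbed by `αₙ Pₙ + βₙ Pₙ₋₁`, where `∑ (|αₙ| + |βₙ|) < ∞` by the
trace class condition. The variables `Pₙ - ζ Pₙ₋₁` and `Pₙ - ζ⁻¹ Pₙ₋₁` diagonalize the free
recurrence with multipliers `ζ⁻¹` and `ζ`, and they determine `(Pₙ, Pₙ₋₁)` because `ζ ≠ ±1`.
Since `|ζ| ≤ |ζ⁻¹|`, the larger of their moduli grows at most by a factor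
`|ζ|⁻¹ (1 + K (|αₙ| + |βₙ|))` per step, and a discrete Grönwall inequality turns this
into `O(|ζ|⁻ⁿ)`.
-/

open Filter Finset MeasureTheory

noncomputable section

open Real

theorem discrete_gronwall_pow {m c : ℕ → ℝ} {q : ℝ} (hq : 0 < q) (hm₀ : 0 ≤ m 0)
    (hc : ∀ n, 0 ≤ c n) (hcs : Summable c) (hm : ∀ n, m (n + 1) ≤ q * (1 + c n) * m n)
    (n : ℕ) : m n ≤ m 0 * exp (∑' k, c k) * q ^ n := by
  have hrescaled : ∀ n, m (n + 1) / q ^ (n + 1) ≤ (1 + c n) * (m n / q ^ n) + 0 := by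
    intro n
    rw [add_zero, div_le_iff₀ (by positivity), pow_succ]
    calc m (n + 1) ≤ q * (1 + c n) * m n := hm n
      _ = (1 + c n) * (m n / q ^ n) * (q ^ n * q) := by field_simp
  have h := discrete_gronwall (u := fun n => m n / q ^ n) (by simpa using hm₀)
    (fun n _ => hrescaled n) (fun n _ => hc n) (fun _ _ => le_rfl) (Nat.zero_le n)
  simp only [pow_zero, div_one, Finset.sum_const_zero, add_zero] at h
  rw [← div_le_iff₀ (by positivity)]
  refine h.trans (mul_le_mul_of_nonneg_left (exp_le_exp.mpr ?_) hm₀)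
  exact hcs.sum_le_tsum _ fun i _ => hc i

theorem max_norm_le_max_norm_sub_mul {ζ : ℂ} (hζ0 : ζ ≠ 0) (hζ1 : ‖ζ‖ ≤ 1) (hζ : ζ⁻¹ ≠ ζ)
    (p q : ℂ) :
    max ‖p‖ ‖q‖ ≤ 2 * ‖ζ‖⁻¹ / ‖ζ⁻¹ - ζ‖ * max ‖p - ζ * q‖ ‖p - ζ⁻¹ * q‖ := by
  set M := max ‖p - ζ * q‖ ‖p - ζ⁻¹ * q‖
  have hD : 0 < ‖ζ⁻¹ - ζ‖ := norm_pos_iff.mpr (sub_ne_zero.mpr hζ)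
  have hinv : 1 ≤ ‖ζ‖⁻¹ := (one_le_inv₀ (norm_pos_iff.mpr hζ0)).mpr hζ1
  have hM : 0 ≤ M := (norm_nonneg _).trans (le_max_left _ _)
  refine max_le ?_ ?_ <;> rw [div_mul_eq_mul_div, le_div_iff₀ hD]
  · calc ‖p‖ * ‖ζ⁻¹ - ζ‖ = ‖ζ⁻¹ * (p - ζ * q) - ζ * (p - ζ⁻¹ * q)‖ := by
          rw [← norm_mul]; congr 1; field_simp; ring
      _ ≤ ‖ζ‖⁻¹ * M + ‖ζ‖ * M := by
          refine (norm_sub_le _ _).trans ?_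
          rw [norm_mul, norm_mul, norm_inv]
          gcongr
          exacts [le_max_left _ _, le_max_right _ _]
      _ ≤ 2 * ‖ζ‖⁻¹ * M := by nlinarith [hζ1.trans hinv]
  · calc ‖q‖ * ‖ζ⁻¹ - ζ‖ = ‖(p - ζ * q) - (p - ζ⁻¹ * q)‖ := by
          rw [← norm_mul]; congr 1; ring
      _ ≤ M + M := (norm_sub_le _ _).trans (add_le_add (le_max_left _ _) (le_max_right _ _))
      _ ≤ 2 * ‖ζ‖⁻¹ * M := by nlinarith

theorem exists_norm_le_mul_inv_pow_of_perturbed_chebyshev {ζ : ℂ} {u : ℤ → ℂ} {α β : ℕ → ℂ}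
    (hζ0 : ζ ≠ 0) (hζ1 : ‖ζ‖ ≤ 1) (hζ : ζ⁻¹ ≠ ζ) (hsum : Summable fun n => ‖α n‖ + ‖β n‖)
    (hrec : ∀ n : ℕ, u (n + 1) = (ζ + ζ⁻¹) * u n - u (n - 1) + (α n * u n + β n * u (n - 1))) :
    ∃ C, ∀ n : ℕ, ‖u n‖ ≤ C * ‖ζ‖⁻¹ ^ n := by
  set r := ‖ζ‖
  have hr : 0 < r := norm_pos_iff.mpr hζ0
  set K := 2 * r⁻¹ / ‖ζ⁻¹ - ζ‖
  have hK : 0 ≤ K := by positivity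
  set ε : ℕ → ℝ := fun n => ‖α n‖ + ‖β n‖
  set x : ℕ → ℂ := fun n => u n - ζ * u (n - 1)
  set y : ℕ → ℂ := fun n => u n - ζ⁻¹ * u (n - 1)
  set M : ℕ → ℝ := fun n => max ‖x n‖ ‖y n‖
  set E : ℕ → ℂ := fun n => α n * u n + β n * u (n - 1)
  have hu : ∀ n : ℕ, max ‖u n‖ ‖u (n - 1)‖ ≤ K * M n := fun n =>
    max_norm_le_max_norm_sub_mul hζ0 hζ1 hζ _ _
  have hE : ∀ n, ‖E n‖ ≤ ε n * K * M n := fun n => calc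
    ‖E n‖ ≤ ‖α n‖ * ‖u n‖ + ‖β n‖ * ‖u (n - 1)‖ := by
        simpa only [norm_mul] using norm_add_le (α n * u n) (β n * u (n - 1))
    _ ≤ ‖α n‖ * (K * M n) + ‖β n‖ * (K * M n) := by
        gcongr
        exacts [(le_max_left _ _).trans (hu n), (le_max_right _ _).trans (hu n)]
    _ = ε n * K * M n := by ring
  have hx : ∀ n : ℕ, x (n + 1) = ζ⁻¹ * x n + E n := fun n => by
    simp only [x, E, Nat.cast_add, Nat.cast_one, add_sub_cancel_right, hrec n]
    linear_combination u (n - 1) * (inv_mul_cancel₀ hζ0)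
  have hy : ∀ n : ℕ, y (n + 1) = ζ * y n + E n := fun n => by
    simp only [y, E, Nat.cast_add, Nat.cast_one, add_sub_cancel_right, hrec n]
    linear_combination u (n - 1) * (mul_inv_cancel₀ hζ0)
  have hM : ∀ n, M (n + 1) ≤ r⁻¹ * (1 + r * K * ε n) * M n := by
    intro n
    have hmul : r⁻¹ * (1 + r * K * ε n) * M n = r⁻¹ * M n + ε n * K * M n := by
      field_simp
    have hrr : r ≤ r⁻¹ := hζ1.trans ((one_le_inv₀ hr).mpr hζ1)
    rw [hmul]
    refine max_le ?_ ?_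
    · rw [hx n]
      refine (norm_add_le _ _).trans (add_le_add ?_ (hE n))
      rw [norm_mul, norm_inv]
      exact mul_le_mul_of_nonneg_left (le_max_left _ _) (by positivity)
    · rw [hy n]
      refine (norm_add_le _ _).trans (add_le_add ?_ (hE n))
      rw [norm_mul]
      exact mul_le_mul hrr (le_max_right _ _) (norm_nonneg _) (by positivity)
  have hgrowth := discrete_gronwall_pow (inv_pos.mpr hr) (by positivity)
    (fun n => by positivity) (hsum.mul_left (r * K)) hM
  refine ⟨K * (M 0 * exp (∑' k, r * K * ε k)), fun n => ?_⟩
  calc ‖u n‖ ≤ K * M n := (le_max_left _ _).trans (hu n)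
    _ ≤ _ := by rw [mul_assoc]; exact mul_le_mul_of_nonneg_left (hgrowth n) hK

theorem IsJacobiSol.eq_perturbed_chebyshev {a b : ℕ → ℝ} {z : ℂ} {u : ℤ → ℂ}
    (hu : IsJacobiSol a b z u) (ha : ∀ n, a n ≠ 0) (n : ℕ) :
    u (n + 1) = 2 * z * u n - u (n - 1) +
      (((z - b n) / a n - 2 * z) * u n + (1 - aext a (n - 1) / a n : ℂ) * u (n - 1)) := by
  have han : (a n : ℂ) ≠ 0 := Complex.ofReal_ne_zero.mpr (ha n)
  field_simp
  linear_combination hu n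

theorem eventually_quarter_le_of_summable {a : ℕ → ℝ} (hsa : Summable fun n => |a n - 1/2|) :
    ∀ᶠ n in atTop, 1/4 ≤ a n := by
  filter_upwards [hsa.tendsto_atTop_zero.eventually (gt_mem_nhds (by norm_num : (0:ℝ) < 1/4))]
    with n hn
  linarith [neg_abs_le (a n - 1/2)]

theorem summable_abs_aext_pred_sub_half {a : ℕ → ℝ} (hsa : Summable fun n => |a n - 1/2|) :
    Summable fun n : ℕ => |aext a (n - 1) - 1/2| := by
  refine (summable_nat_add_iff 1).mp (hsa.congr fun n => ?_)
  simp [aext, (Int.natCast_nonneg n).not_gt]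

theorem summable_jacobi_perturbation {a b : ℕ → ℝ}
    (htr : Summable fun n => |a n - 1/2| + |b n|) (z : ℂ) :
    Summable fun n : ℕ => ‖(z - b n) / a n - 2 * z‖ + ‖(1 - aext a (n - 1) / a n : ℂ)‖ := by
  have hsa : Summable fun n => |a n - 1/2| :=
    htr.of_nonneg_of_le (fun _ => abs_nonneg _) fun n => le_add_of_nonneg_right (abs_nonneg _)
  refine Summable.of_norm_bounded_eventually_nat
    (((htr.mul_left (2 * ‖z‖ + 1)).add (summable_abs_aext_pred_sub_half hsa)).mul_left 4) ?_
  filter_upwards [eventually_quarter_le_of_summable hsa] with n hn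
  have hdiv : ∀ w : ℂ, ‖w / a n‖ ≤ 4 * ‖w‖ := fun w => by
    rw [norm_div, Complex.norm_real, Real.norm_of_nonneg (by linarith), div_le_iff₀ (by linarith)]
    nlinarith [norm_nonneg w]
  have han : (a n : ℂ) ≠ 0 := Complex.ofReal_ne_zero.mpr (by linarith)
  have hdiag : (z - b n) / a n - 2 * z = -(((2 * (a n - 1/2) : ℝ) : ℂ) * z + b n) / a n := by
    push_cast; field_simp; ring
  have hoff : (1 - aext a (n - 1) / a n : ℂ) =
      (((a n - 1/2) - (aext a (n - 1) - 1/2) : ℝ) : ℂ) / a n := by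
    push_cast; field_simp; ring
  rw [Real.norm_of_nonneg (by positivity), hdiag, hoff]
  refine (add_le_add (hdiv _) (hdiv _)).trans ?_
  have hdiag_le : ‖((2 * (a n - 1/2) : ℝ) : ℂ) * z + b n‖ ≤ 2 * |a n - 1/2| * ‖z‖ + |b n| := by
    refine (norm_add_le _ _).trans_eq ?_
    simp only [norm_mul, Complex.norm_real, Real.norm_eq_abs, abs_two]
  have hoff_le := abs_sub (a n - 1/2) (aext a (n - 1) - 1/2)
  simp only [norm_neg, Complex.norm_real, Real.norm_eq_abs]
  nlinarith [mul_nonneg (norm_nonneg z) (abs_nonneg (b n))]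

theorem orthonormal_polynomials_bound_general
    (a b : ℕ → ℝ) (ha : ∀ n, 0 < a n)
    (htr : Summable (fun n : ℕ => |a n - 1/2| + |b n|))
    (ζ : ℂ) (hζ0 : 0 < ‖ζ‖) (hζ1 : ‖ζ‖ ≤ 1) (hζp : ζ ≠ 1) (hζm : ζ ≠ -1)
    (z : ℂ) (hz : z = (ζ + ζ⁻¹) / 2)
    (P : ℤ → ℂ) (hP : IsJacobiSol a b z P) :
    ∃ C : ℝ, 0 < C ∧ ∀ n : ℕ, ‖P (n : ℤ)‖ ≤ C * ‖ζ‖ ^ (-(n : ℤ)) := by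
  have hζne : ζ ≠ 0 := norm_pos_iff.mp hζ0
  have hζinv : ζ⁻¹ ≠ ζ := by
    rw [Ne, inv_eq_self₀]
    tauto
  have h2z : 2 * z = ζ + ζ⁻¹ := by rw [hz]; ring
  obtain ⟨C, hC⟩ := exists_norm_le_mul_inv_pow_of_perturbed_chebyshev hζne hζ1 hζinv
    (summable_jacobi_perturbation htr z) fun n => by
      rw [← h2z]
      exact hP.eq_perturbed_chebyshev (fun n => (ha n).ne') n
  refine ⟨max C 1, one_pos.trans_le (le_max_right _ _), fun n => ?_⟩
  rw [zpow_neg, zpow_natCast, ← inv_pow]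
  exact (hC n).trans (mul_le_mul_of_nonneg_right (le_max_left _ _) (by positivity))

/-- the orthonormal polynomials satisfy `|P_n(z)| ≤ C |ζ|^{-n}` under
the trace class condition. -/
theorem orthonormal_polynomials_bound
    (a b : ℕ → ℝ) (ha : ∀ n, 0 < a n)
    (htr : Summable (fun n : ℕ => |a n - 1/2| + |b n|))
    (ζ : ℂ) (hζ0 : 0 < ‖ζ‖) (hζ1 : ‖ζ‖ ≤ 1) (hζp : ζ ≠ 1) (hζm : ζ ≠ -1)
    (z : ℂ) (hz : z = (ζ + ζ⁻¹) / 2)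
    (P : ℤ → ℂ) (hP : IsJacobiSol a b z P) (hPm : P (-1) = 0) (hP0 : P 0 = 1) :
    ∃ C : ℝ, 0 < C ∧ ∀ n : ℕ, ‖P (n : ℤ)‖ ≤ C * ‖ζ‖ ^ (-(n : ℤ)) :=
  orthonormal_polynomials_bound_general a b ha htr ζ hζ0 hζ1 hζp hζm z hz P hP
end
end

section
/- Assume the first-moment condition ∑_{n≥0} (n+1)(|a_n - 1/2| + |b_n|) < ∞. Let ζ ∈ ℂ with 0 < |ζ| ≤ 1 (the values ζ = ±1 are now allowed), and set z = (ζ + ζ⁻¹)/2. Then there exists a constant C > 0 such that |P_n(z)| ≤ C (n+1) |ζ|^{-n} for all n ≥ 0. -/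
open Filter Finset MeasureTheory

noncomputable section

/-!
With `t = ζ + ζ⁻¹ = 2z` the Jacobi equation reads `P_{n+1} = t P_n - P_{n-1} - 2 (V P)_n`, a
perturbation of the free recurrence, whose solution `U_k = ∑_{j<k} ζ^{k-1-2j}` satisfies
`|U_{k+1}| ≤ (k+1) |ζ|^{-k}` also at `ζ = ±1`. Variation of constants gives
`P_n = U_{n+1} - 2 ∑_{m<n} U_{n-m} (V P)_m`, so the weighted norms `g_n = |P_n| |ζ|^n / (n+1)` and
their running maxima `H_n` satisfy `g_n ≤ 1 + ∑_{m<n} c_m H_{m+1}`, where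
`c_m ≍ (m+2)(|a_{m-1} - 1/2| + |b_m| + |a_m - 1/2|)` is summable by the first-moment condition.
The term `m = n - 1` contains `H_n` itself; since `H` is monotone, choosing `N` with
`∑_{m ≥ N} c_m ≤ 1/2` and absorbing the tail gives `H_n ≤ 2 (1 + ∑_{m<N} c_m H_{m+1})`.
-/

/-- `chebU ζ k = ∑_{j<k} ζ^(k-1-2j) = U_{k-1}((ζ + ζ⁻¹)/2)`, a Chebyshev polynomial of the
second kind. -/
def chebU (ζ : ℂ) : ℕ → ℂ
  | 0 => 0
  | k + 1 => ζ ^ k + ζ⁻¹ * chebU ζ k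

@[simp] lemma chebU_zero (ζ : ℂ) : chebU ζ 0 = 0 := rfl

lemma chebU_succ (ζ : ℂ) (k : ℕ) : chebU ζ (k + 1) = ζ ^ k + ζ⁻¹ * chebU ζ k := rfl

@[simp] lemma chebU_one (ζ : ℂ) : chebU ζ 1 = 1 := by simp [chebU_succ]

lemma chebU_add_two {ζ : ℂ} (hζ : ζ ≠ 0) (k : ℕ) :
    chebU ζ (k + 2) = (ζ + ζ⁻¹) * chebU ζ (k + 1) - chebU ζ k := by
  have h : ζ * chebU ζ (k + 1) = ζ ^ (k + 1) + chebU ζ k := by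
    rw [chebU_succ, mul_add, ← mul_assoc, mul_inv_cancel₀ hζ, one_mul, pow_succ']
  rw [chebU_succ ζ (k + 1)]
  linear_combination -h

lemma norm_chebU_succ_mul_pow_le {ζ : ℂ} (hζ : ζ ≠ 0) (hζ1 : ‖ζ‖ ≤ 1) (k : ℕ) :
    ‖chebU ζ (k + 1)‖ * ‖ζ‖ ^ k ≤ k + 1 := by
  induction k with
  | zero => simp
  | succ k ih =>
    have hinv : ‖ζ⁻¹‖ * ‖ζ‖ ^ (k + 1) = ‖ζ‖ ^ k := by
      rw [norm_inv, pow_succ', inv_mul_cancel_left₀ (norm_ne_zero_iff.mpr hζ)]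
    have hsq : ‖ζ‖ ^ (k + 1) * ‖ζ‖ ^ (k + 1) ≤ 1 := by
      rw [← mul_pow]
      exact pow_le_one₀ (by positivity) (mul_le_one₀ hζ1 (norm_nonneg ζ) hζ1)
    calc ‖chebU ζ (k + 1 + 1)‖ * ‖ζ‖ ^ (k + 1)
        ≤ (‖ζ‖ ^ (k + 1) + ‖ζ⁻¹‖ * ‖chebU ζ (k + 1)‖) * ‖ζ‖ ^ (k + 1) := by
          rw [chebU_succ ζ (k + 1)]
          gcongr
          exact (norm_add_le _ _).trans_eq (by rw [norm_pow, norm_mul])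
      _ = ‖ζ‖ ^ (k + 1) * ‖ζ‖ ^ (k + 1) + ‖chebU ζ (k + 1)‖ * ‖ζ‖ ^ k := by
          rw [← hinv]; ring
      _ ≤ (k + 1 : ℕ) + 1 := by push_cast; linarith

lemma norm_chebU_sub_mul_pow_le {ζ : ℂ} (hζ : ζ ≠ 0) (hζ1 : ‖ζ‖ ≤ 1) {m n : ℕ} (hmn : m < n) :
    ‖chebU ζ (n - m)‖ * ‖ζ‖ ^ n ≤ (n + 1) * ‖ζ‖ ^ (m + 1) := by
  obtain ⟨k, rfl⟩ := Nat.exists_eq_add_of_lt hmn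
  rw [show m + k + 1 - m = k + 1 by omega, show m + k + 1 = k + (m + 1) by ring, pow_add,
    ← mul_assoc]
  gcongr
  exact (norm_chebU_succ_mul_pow_le hζ hζ1 k).trans (by push_cast; linarith)

section Duhamel

variable {R : Type*} [CommRing R] {t : R} {U : ℕ → R}

lemma sum_antidiagonal_add_two_of_recurrence (hU0 : U 0 = 0) (hU1 : U 1 = 1)
    (hU : ∀ k, U (k + 2) = t * U (k + 1) - U k) (f : ℕ → R) (n : ℕ) :
    ∑ p ∈ antidiagonal (n + 2), U p.1 * f p.2 =
      t * ∑ p ∈ antidiagonal (n + 1), U p.1 * f p.2 - ∑ p ∈ antidiagonal n, U p.1 * f p.2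
        + f (n + 1) := by
  simp only [Nat.sum_antidiagonal_succ, hU0, hU1, zero_mul, zero_add, one_mul, add_assoc,
    Nat.reduceAdd, hU, sub_mul, sum_sub_distrib, mul_sum, mul_assoc]
  ring

lemma eq_sub_sum_antidiagonal_of_recurrence (hU0 : U 0 = 0) (hU1 : U 1 = 1)
    (hU : ∀ k, U (k + 2) = t * U (k + 1) - U k) {u f : ℕ → R} (hu0 : u 0 = 0) (hu1 : u 1 = 1)
    (hu : ∀ k, u (k + 2) = t * u (k + 1) - u k - f k) (n : ℕ) :
    u (n + 1) = U (n + 1) - ∑ p ∈ antidiagonal n, U p.1 * f p.2 := by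
  induction n using Nat.twoStepInduction with
  | zero => simp [hu1, hU0, hU1]
  | one => simp [hu, hu0, hu1, hU, hU0, hU1, Nat.sum_antidiagonal_succ]
  | more n ih0 ih1 =>
    rw [hu (n + 1), ih1, ih0, hU (n + 1), sum_antidiagonal_add_two_of_recurrence hU0 hU1 hU]
    ring

lemma sum_antidiagonal_eq_sum_range (hU0 : U 0 = 0) (f : ℕ → R) (n : ℕ) :
    ∑ p ∈ antidiagonal n, U p.1 * f p.2 = ∑ m ∈ range n, U (n - m) * f m := by
  rw [← Nat.sum_antidiagonal_swap, Nat.sum_antidiagonal_eq_sum_range_succ_mk, sum_range_succ]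
  simp [hU0]

end Duhamel

lemma exists_forall_le_of_le_add_sum_mul_succ {c h : ℕ → ℝ} {A : ℝ} (hc0 : ∀ m, 0 ≤ c m)
    (hc : Summable c) (hh0 : ∀ n, 0 ≤ h n) (hmono : Monotone h)
    (H : ∀ n, h n ≤ A + ∑ m ∈ range n, c m * h (m + 1)) :
    ∃ C, ∀ n, h n ≤ C := by
  obtain ⟨N, hN⟩ : ∃ N, ∑' k, c (k + N) ≤ 1 / 2 :=
    ((tendsto_sum_nat_add c).eventually (ge_mem_nhds (by norm_num))).exists
  refine ⟨2 * (A + ∑ m ∈ range N, c m * h (m + 1)), fun n => ?_⟩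
  suffices hle : ∀ n, N ≤ n → h n ≤ 2 * (A + ∑ m ∈ range N, c m * h (m + 1)) from
    (hmono (le_max_left n N)).trans (hle _ (le_max_right n N))
  intro n hn
  have htail : ∑ m ∈ Ico N n, c m ≤ 1 / 2 := by
    rw [sum_Ico_eq_sum_range]
    refine le_trans ?_ hN
    simp_rw [add_comm N]
    exact ((summable_nat_add_iff N).mpr hc).sum_le_tsum _ fun k _ => hc0 _
  have hrest : ∑ m ∈ Ico N n, c m * h (m + 1) ≤ h n / 2 :=
    calc ∑ m ∈ Ico N n, c m * h (m + 1) ≤ ∑ m ∈ Ico N n, c m * h n :=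
          sum_le_sum fun m hm => mul_le_mul_of_nonneg_left
            (hmono (by rw [mem_Ico] at hm; omega)) (hc0 m)
      _ = (∑ m ∈ Ico N n, c m) * h n := by rw [sum_mul]
      _ ≤ 1 / 2 * h n := by gcongr; exact hh0 n
      _ = h n / 2 := by ring
  have := H n
  rw [← sum_range_add_sum_Ico _ hn] at this
  linarith

lemma exists_forall_le_of_le_add_sum_mul_partialSups {c g : ℕ → ℝ} {A : ℝ} (hc0 : ∀ m, 0 ≤ c m)
    (hc : Summable c) (hg0 : ∀ n, 0 ≤ g n)
    (H : ∀ n, g n ≤ A + ∑ m ∈ range n, c m * partialSups g (m + 1)) :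
    ∃ C, ∀ n, g n ≤ C := by
  have hS0 : ∀ n, 0 ≤ partialSups g n := fun n => (hg0 0).trans (le_partialSups_of_le g n.zero_le)
  have hS : ∀ n, partialSups g n ≤ A + ∑ m ∈ range n, c m * partialSups g (m + 1) :=
    fun n => partialSups_le g n _ fun k hk => (H k).trans <| add_le_add le_rfl
      (sum_le_sum_of_subset_of_nonneg (range_subset_range.mpr hk)
        fun m _ _ => mul_nonneg (hc0 m) (hS0 _))
  obtain ⟨C, hC⟩ := exists_forall_le_of_le_add_sum_mul_succ hc0 hc hS0 (partialSups g).monotone hS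
  exact ⟨C, fun n => (le_partialSups g n).trans (hC n)⟩

section Jacobi

variable {a b : ℕ → ℝ} {P : ℤ → ℂ}

@[simp] lemma aext_natCast (a : ℕ → ℝ) (k : ℕ) : aext a k = a k := by simp [aext]

lemma IsJacobiSol.add_one_eq {z : ℂ} (hP : IsJacobiSol a b z P) (n : ℕ) :
    P (n + 1) = 2 * z * P n - P (n - 1) - 2 * jV a b P n := by
  simp only [jV]
  push_cast
  linear_combination 2 * hP n

lemma IsJacobiSol.eq_chebU_sub_sum {ζ : ℂ} (hζ : ζ ≠ 0) (hP : IsJacobiSol a b ((ζ + ζ⁻¹) / 2) P)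
    (hPm : P (-1) = 0) (hP0 : P 0 = 1) (n : ℕ) :
    P n = chebU ζ (n + 1) - ∑ m ∈ range n, chebU ζ (n - m) * (2 * jV a b P m) := by
  have hrec : ∀ k : ℕ, P ((k + 2 : ℕ) - 1) =
      (ζ + ζ⁻¹) * P ((k + 1 : ℕ) - 1) - P ((k : ℕ) - 1) - 2 * jV a b P k := fun k => by
    rw [show ((k + 2 : ℕ) : ℤ) - 1 = k + 1 by push_cast; ring, hP.add_one_eq k]
    push_cast
    ring_nf
  have h := eq_sub_sum_antidiagonal_of_recurrence (chebU_zero ζ) (chebU_one ζ) (chebU_add_two hζ)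
    (u := fun k : ℕ => P (k - 1)) (by simpa using hPm) (by simpa using hP0) hrec n
  rw [← sum_antidiagonal_eq_sum_range (chebU_zero ζ) fun m => 2 * jV a b P m]
  simpa using h

def scaledNorm (P : ℤ → ℂ) (r : ℝ) (n : ℕ) : ℝ := ‖P n‖ * r ^ n / (n + 1)

def jVWeight (a b : ℕ → ℝ) (m : ℕ) : ℝ :=
  2 * (m + 2) * (|aext a (m - 1) - 1 / 2| + |b m| + |a m - 1 / 2|)

lemma scaledNorm_nonneg (P : ℤ → ℂ) {r : ℝ} (hr : 0 ≤ r) (n : ℕ) : 0 ≤ scaledNorm P r n := by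
  unfold scaledNorm; positivity

lemma jVWeight_nonneg (a b : ℕ → ℝ) (m : ℕ) : 0 ≤ jVWeight a b m := by
  unfold jVWeight; positivity

lemma summable_jVWeight
    (hm : Summable fun n : ℕ => ((n : ℝ) + 1) * (|a n - 1 / 2| + |b n|)) :
    Summable (jVWeight a b) := by
  have hprev : Summable fun m : ℕ => 2 * ((m : ℝ) + 2) * |aext a (m - 1) - 1 / 2| := by
    refine (summable_nat_add_iff 1).mp <| (hm.mul_left 6).of_nonneg_of_le (fun _ => by positivity)
      fun k => ?_
    simp only [Nat.cast_add, Nat.cast_one, add_sub_cancel_right, aext_natCast]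
    nlinarith [abs_nonneg (a k - 1 / 2), abs_nonneg (b k), (k.cast_nonneg : (0 : ℝ) ≤ k)]
  have hcur : Summable fun m : ℕ => 2 * ((m : ℝ) + 2) * (|b m| + |a m - 1 / 2|) :=
    (hm.mul_left 4).of_nonneg_of_le (fun _ => by positivity) fun m => by
      nlinarith [abs_nonneg (a m - 1 / 2), abs_nonneg (b m)]
  exact (hprev.add hcur).congr fun m => by unfold jVWeight; ring

lemma mul_norm_jV_le {f : ℤ → ℂ} {ρ M : ℝ} (hρ : 0 ≤ ρ) (m : ℕ)
    (hf : ∀ k : ℤ, m - 1 ≤ k → k ≤ m + 1 → ρ * ‖f k‖ ≤ M) :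
    ρ * ‖jV a b f m‖ ≤ (|aext a (m - 1) - 1 / 2| + |b m| + |a m - 1 / 2|) * M := by
  have hnorm : ‖jV a b f m‖ ≤ |aext a (m - 1) - 1 / 2| * ‖f (m - 1)‖ + |b m| * ‖f m‖
      + |a m - 1 / 2| * ‖f (m + 1)‖ := by
    refine (norm_add_le _ _).trans (add_le_add (norm_add_le _ _) le_rfl) |>.trans_eq ?_
    simp only [norm_mul, Complex.norm_real, Real.norm_eq_abs]
  calc ρ * ‖jV a b f m‖
      ≤ |aext a (m - 1) - 1 / 2| * (ρ * ‖f (m - 1)‖) + |b m| * (ρ * ‖f m‖)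
        + |a m - 1 / 2| * (ρ * ‖f (m + 1)‖) := by
        nlinarith [mul_le_mul_of_nonneg_left hnorm hρ]
    _ ≤ |aext a (m - 1) - 1 / 2| * M + |b m| * M + |a m - 1 / 2| * M := by
        gcongr
        · exact hf _ le_rfl (by omega)
        · exact hf _ (by omega) (by omega)
        · exact hf _ (by omega) le_rfl
    _ = _ := by ring

lemma pow_mul_norm_le_partialSups {r : ℝ} (hr0 : 0 ≤ r) (hr1 : r ≤ 1) {k m : ℕ} (hk : k ≤ m + 1) :
    r ^ (m + 1) * ‖P k‖ ≤ (m + 2) * partialSups (scaledNorm P r) (m + 1) :=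
  calc r ^ (m + 1) * ‖P k‖ ≤ r ^ k * ‖P k‖ :=
        mul_le_mul_of_nonneg_right (pow_le_pow_of_le_one hr0 hr1 hk) (norm_nonneg _)
    _ = (k + 1) * scaledNorm P r k := by unfold scaledNorm; field_simp
    _ ≤ (m + 2) * partialSups (scaledNorm P r) (m + 1) := by
        have hkm : (k : ℝ) ≤ m + 1 := by exact_mod_cast hk
        exact mul_le_mul (by linarith) (le_partialSups_of_le _ hk) (scaledNorm_nonneg P hr0 k)
          (by positivity)

lemma pow_mul_norm_jV_le {r : ℝ} (hr0 : 0 ≤ r) (hr1 : r ≤ 1) (hPm : P (-1) = 0) (m : ℕ) :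
    r ^ (m + 1) * ‖2 * jV a b P m‖ ≤ jVWeight a b m * partialSups (scaledNorm P r) (m + 1) := by
  have hS0 : 0 ≤ partialSups (scaledNorm P r) (m + 1) :=
    (scaledNorm_nonneg P hr0 0).trans (le_partialSups_of_le _ (Nat.zero_le _))
  have h := mul_norm_jV_le (a := a) (b := b) (f := P) (pow_nonneg hr0 (m + 1)) m
    (M := (m + 2) * partialSups (scaledNorm P r) (m + 1)) fun k hk1 hk2 => by
      rcases lt_or_ge k 0 with hk | hk
      · obtain rfl : k = -1 := by omega
        rw [hPm, norm_zero, mul_zero]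
        positivity
      · lift k to ℕ using hk
        exact pow_mul_norm_le_partialSups hr0 hr1 (by omega)
  rw [norm_mul, Complex.norm_two, jVWeight]
  nlinarith

lemma IsJacobiSol.scaledNorm_le {ζ : ℂ} (hζ : ζ ≠ 0) (hζ1 : ‖ζ‖ ≤ 1)
    (hP : IsJacobiSol a b ((ζ + ζ⁻¹) / 2) P) (hPm : P (-1) = 0) (hP0 : P 0 = 1) (n : ℕ) :
    scaledNorm P ‖ζ‖ n ≤
      1 + ∑ m ∈ range n, jVWeight a b m * partialSups (scaledNorm P ‖ζ‖) (m + 1) := by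
  set H := partialSups (scaledNorm P ‖ζ‖)
  have hterm : ∀ m ∈ range n, ‖chebU ζ (n - m) * (2 * jV a b P m)‖ * ‖ζ‖ ^ n ≤
      (n + 1) * (jVWeight a b m * H (m + 1)) := fun m hm => by
    calc ‖chebU ζ (n - m) * (2 * jV a b P m)‖ * ‖ζ‖ ^ n
        = ‖chebU ζ (n - m)‖ * ‖ζ‖ ^ n * ‖2 * jV a b P m‖ := by rw [norm_mul]; ring
      _ ≤ (n + 1) * ‖ζ‖ ^ (m + 1) * ‖2 * jV a b P m‖ := by
          exact mul_le_mul_of_nonneg_right (norm_chebU_sub_mul_pow_le hζ hζ1 (mem_range.mp hm))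
            (norm_nonneg _)
      _ ≤ (n + 1) * (jVWeight a b m * H (m + 1)) := by
          rw [mul_assoc]
          exact mul_le_mul_of_nonneg_left (pow_mul_norm_jV_le (norm_nonneg ζ) hζ1 hPm m)
            (by positivity)
  have hnorm : ‖P n‖ * ‖ζ‖ ^ n ≤ (n + 1) * (1 + ∑ m ∈ range n, jVWeight a b m * H (m + 1)) :=
    calc ‖P n‖ * ‖ζ‖ ^ n
        ≤ ‖chebU ζ (n + 1)‖ * ‖ζ‖ ^ n
          + ∑ m ∈ range n, ‖chebU ζ (n - m) * (2 * jV a b P m)‖ * ‖ζ‖ ^ n := by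
          rw [hP.eq_chebU_sub_sum hζ hPm hP0, ← sum_mul, ← add_mul]
          gcongr
          exact (norm_sub_le _ _).trans (add_le_add le_rfl (norm_sum_le _ _))
      _ ≤ (n + 1) + ∑ m ∈ range n, (n + 1) * (jVWeight a b m * H (m + 1)) :=
          add_le_add (norm_chebU_succ_mul_pow_le hζ hζ1 n) (sum_le_sum hterm)
      _ = _ := by rw [← mul_sum]; ring
  rw [scaledNorm, div_le_iff₀ (by positivity)]
  linarith

end Jacobi

theorem orthonormal_polynomials_bound_edge_general
    (a b : ℕ → ℝ)
    (hm : Summable (fun n : ℕ => ((n : ℝ) + 1) * (|a n - 1/2| + |b n|)))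
    (ζ : ℂ) (hζ0 : 0 < ‖ζ‖) (hζ1 : ‖ζ‖ ≤ 1)
    (z : ℂ) (hz : z = (ζ + ζ⁻¹) / 2)
    (P : ℤ → ℂ) (hP : IsJacobiSol a b z P) (hPm : P (-1) = 0) (hP0 : P 0 = 1) :
    ∃ C : ℝ, 0 < C ∧ ∀ n : ℕ, ‖P (n : ℤ)‖ ≤ C * ((n : ℝ) + 1) * ‖ζ‖ ^ (-(n : ℤ)) := by
  subst hz
  have hζ : ζ ≠ 0 := norm_pos_iff.mp hζ0
  obtain ⟨C, hC⟩ := exists_forall_le_of_le_add_sum_mul_partialSups (jVWeight_nonneg a b)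
    (summable_jVWeight hm) (scaledNorm_nonneg P hζ0.le) (hP.scaledNorm_le hζ hζ1 hPm hP0)
  refine ⟨max C 1, by positivity, fun n => ?_⟩
  have hn := (hC n).trans (le_max_left C 1)
  rw [scaledNorm, div_le_iff₀ (by positivity)] at hn
  rw [zpow_neg, zpow_natCast, ← div_eq_mul_inv, le_div_iff₀ (pow_pos hζ0 n)]
  linarith

/-- under the first-moment condition, `|P_n(z)| ≤ C (n+1) |ζ|^{-n}` for
all `ζ` with `0 < |ζ| ≤ 1`, including `ζ = ±1`. -/
theorem orthonormal_polynomials_bound_edge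
    (a b : ℕ → ℝ) (ha : ∀ n, 0 < a n)
    (hm : Summable (fun n : ℕ => ((n : ℝ) + 1) * (|a n - 1/2| + |b n|)))
    (ζ : ℂ) (hζ0 : 0 < ‖ζ‖) (hζ1 : ‖ζ‖ ≤ 1)
    (z : ℂ) (hz : z = (ζ + ζ⁻¹) / 2)
    (P : ℤ → ℂ) (hP : IsJacobiSol a b z P) (hPm : P (-1) = 0) (hP0 : P 0 = 1) :
    ∃ C : ℝ, 0 < C ∧ ∀ n : ℕ, ‖P (n : ℤ)‖ ≤ C * ((n : ℝ) + 1) * ‖ζ‖ ^ (-(n : ℤ)) :=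
  orthonormal_polynomials_bound_edge_general a b hm ζ hζ0 hζ1 z hz P hP hPm hP0
end
end

section
/- Assume the trace class condition ∑_{n≥0}(|a_n - 1/2| + |b_n|) < ∞. Let ζ ∈ ℂ with 0 < |ζ| < 1, set z = (ζ + ζ⁻¹)/2, and let f = (f_n)_{n≥-1} be a solution of the Jacobi equation at z with f_n ζ^{-n} → 1. If f_{-1} = 0 (i.e. the Jost function Ω(z) = ζ f_{-1} vanishes), then the limit lim_{n→∞} ζ^{-n} P_n(z) exists and is nonzero. -/
open Filter Finset MeasureTheory

noncomputable section

/-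
Since every `a_n ≠ 0`, a solution of the Jacobi equation is determined by its
values at `-1` and `0`, so `f_{-1} = 0` forces `f = f_0 P`. The asymptotics `f_n ζ^{-n} → 1`
rule out `f_0 = 0`, and then `ζ^{-n} P_n(z) → 1 / f_0`.
-/

namespace IsJacobiSol

variable {a b : ℕ → ℝ} {z : ℂ} {u v : ℤ → ℂ}

lemma sub (hu : IsJacobiSol a b z u) (hv : IsJacobiSol a b z v) :
    IsJacobiSol a b z (u - v) := fun n => by
  simp only [Pi.sub_apply]
  linear_combination hu n - hv n

lemma const_mul (c : ℂ) (hu : IsJacobiSol a b z u) :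
    IsJacobiSol a b z (fun n => c * u n) := fun n => by
  linear_combination c * hu n

lemma eq_zero_of_initial_eq_zero (ha : ∀ n, a n ≠ 0) (hu : IsJacobiSol a b z u)
    (hm : u (-1) = 0) (h0 : u 0 = 0) (n : ℕ) : u n = 0 := by
  suffices h : ∀ n : ℕ, u ((n : ℤ) - 1) = 0 ∧ u n = 0 from (h n).2
  intro n
  induction n with
  | zero => exact ⟨hm, h0⟩
  | succ n ih =>
    obtain ⟨hprev, hcur⟩ := ih
    have hstep : (a n : ℂ) * u ((n : ℤ) + 1) = 0 := by
      linear_combination hu n - (aext a ((n : ℤ) - 1) : ℂ) * hprev + (z - b n) * hcur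
    refine ⟨by simpa using hcur, ?_⟩
    push_cast
    exact (mul_eq_zero.1 hstep).resolve_left (by exact_mod_cast ha n)

lemma eq_mul_of_neg_one_eq_zero (ha : ∀ n, a n ≠ 0) (hu : IsJacobiSol a b z u)
    (hv : IsJacobiSol a b z v) (hum : u (-1) = 0) (hvm : v (-1) = 0) (hv0 : v 0 = 1)
    (n : ℕ) : u n = u 0 * v n := by
  have hw := hu.sub (hv.const_mul (u 0))
  refine sub_eq_zero.1 (hw.eq_zero_of_initial_eq_zero ha ?_ ?_ n) <;>
    simp [hum, hvm, hv0]

end IsJacobiSol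

lemma ne_zero_of_tendsto_mul_zpow_of_eq_mul {u v : ℤ → ℂ} {ζ : ℂ}
    (hasym : Tendsto (fun n : ℕ => u n * ζ ^ (-(n : ℤ))) atTop (nhds 1))
    (huv : ∀ n : ℕ, u n = u 0 * v n) : u 0 ≠ 0 := by
  intro h0
  refine zero_ne_one (tendsto_nhds_unique ?_ hasym)
  simp only [huv, h0, zero_mul, tendsto_const_nhds]

theorem szego_asymptotics_eigenvalue_general
    (a b : ℕ → ℝ) (ha : ∀ n, 0 < a n)
    (ζ : ℂ)
    (z : ℂ)
    (f : ℤ → ℂ) (hf : IsJacobiSol a b z f)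
    (hasym : Filter.Tendsto (fun n : ℕ => f (n : ℤ) * ζ ^ (-(n : ℤ))) Filter.atTop (nhds 1))
    (hres : f (-1) = 0)
    (P : ℤ → ℂ) (hP : IsJacobiSol a b z P) (hPm : P (-1) = 0) (hP0 : P 0 = 1) :
    ∃ L : ℂ, L ≠ 0 ∧
      Filter.Tendsto (fun n : ℕ => ζ ^ (-(n : ℤ)) * P (n : ℤ)) Filter.atTop (nhds L) := by
  have hfP := hf.eq_mul_of_neg_one_eq_zero (fun n => (ha n).ne') hP hres hPm hP0
  have hf0 := ne_zero_of_tendsto_mul_zpow_of_eq_mul hasym hfP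
  refine ⟨(f 0)⁻¹, inv_ne_zero hf0, ?_⟩
  have hPf : (fun n : ℕ => ζ ^ (-(n : ℤ)) * P n)
      = fun n : ℕ => (f 0)⁻¹ * (f n * ζ ^ (-(n : ℤ))) := by
    funext n
    rw [hfP n]
    field_simp
  rw [hPf]
  simpa using hasym.const_mul (f 0)⁻¹

/-- if the Jost function vanishes at `z` (i.e. `f_{-1} = 0`), then
`ζ^{-n} P_n(z)` converges to a nonzero limit. -/
theorem szego_asymptotics_eigenvalue
    (a b : ℕ → ℝ) (ha : ∀ n, 0 < a n)
    (htr : Summable (fun n : ℕ => |a n - 1/2| + |b n|))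
    (ζ : ℂ) (hζ0 : 0 < ‖ζ‖) (hζ1 : ‖ζ‖ < 1)
    (z : ℂ) (hz : z = (ζ + ζ⁻¹) / 2)
    (f : ℤ → ℂ) (hf : IsJacobiSol a b z f)
    (hasym : Filter.Tendsto (fun n : ℕ => f (n : ℤ) * ζ ^ (-(n : ℤ))) Filter.atTop (nhds 1))
    (hres : f (-1) = 0)
    (P : ℤ → ℂ) (hP : IsJacobiSol a b z P) (hPm : P (-1) = 0) (hP0 : P 0 = 1) :
    ∃ L : ℂ, L ≠ 0 ∧
      Filter.Tendsto (fun n : ℕ => ζ ^ (-(n : ℤ)) * P (n : ℤ)) Filter.atTop (nhds L) :=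
  szego_asymptotics_eigenvalue_general a b ha ζ z f hf hasym hres P hP hPm hP0
end
end
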